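/- arXiv:1101.4149 — 10 statements merged into one kernel-verified Lean document; each statement's English description precedes it below -/
import Mathlib

section
/- Let m ≥ 4 be a natural number and let (k₁,k₂,k₃,k₄) be a quadruple of natural numbers with k₃ < k₁ ≤ k₂ < k₄ ≤ m−1 and k₁+k₂ = k₃+k₄. Then the complex number f = ((1−ζ^k₁)(1−ζ^k₂))/((1−ζ^k₃)(1−ζ^k₄)), where ζ = exp(2πi/m), is real and satisfies f > 1. -/
/-- ζ_m = exp(2πi/m), a primitive m-th root of unity. -/
noncomputable def zetaC (m : ℕ) : ℂ := Complex.exp (2 * Real.pi * Complex.I / m)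

/-- f_m(k₁,k₂,k₃,k₄) = ((1−ζ^k₁)(1−ζ^k₂))/((1−ζ^k₃)(1−ζ^k₄)). -/
noncomputable def fm (m k1 k2 k3 k4 : ℕ) : ℂ :=
  ((1 - zetaC m ^ k1) * (1 - zetaC m ^ k2)) / ((1 - zetaC m ^ k3) * (1 - zetaC m ^ k4))

/-!
Writing `θ_j = π k_j / m`, one has `1 - ζ^{k_j} = -2i sin θ_j e^{iθ_j}`. Since
`θ₁ + θ₂ = θ₃ + θ₄`, the phases cancel and `f = sin θ₁ sin θ₂ / (sin θ₃ sin θ₄)` is real.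
By `2 sin a sin b = cos (a - b) - cos (a + b)`, comparing the two products reduces to
`cos (θ₄ - θ₃) < cos (θ₂ - θ₁)`, which holds because `0 ≤ θ₂ - θ₁ < θ₄ - θ₃ ≤ π`.
-/

open Complex in
lemma Complex.one_sub_exp_two_mul_I (θ : ℝ) :
    1 - exp (2 * θ * I) = -2 * I * Real.sin θ * exp (θ * I) := by
  have h_inv : exp (-θ * I) * exp (θ * I) = 1 := by rw [← exp_add]; simp
  have h_sq : exp (θ * I) * exp (θ * I) = exp (2 * θ * I) := by rw [← exp_add]; ring_nf
  rw [ofReal_sin, sin]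
  linear_combination -h_inv + h_sq + (exp (-θ * I) * exp (θ * I) - exp (θ * I) ^ 2) * I_sq

lemma zetaC_pow (m k : ℕ) :
    zetaC m ^ k = Complex.exp (2 * (Real.pi * k / m : ℝ) * Complex.I) := by
  rw [zetaC, ← Complex.exp_nat_mul]
  congr 1
  push_cast
  ring

open Complex in
lemma one_sub_exp_ratio_eq_sin_ratio {θ₁ θ₂ θ₃ θ₄ : ℝ} (hθ : θ₁ + θ₂ = θ₃ + θ₄) :
    (1 - exp (2 * θ₁ * I)) * (1 - exp (2 * θ₂ * I)) /
        ((1 - exp (2 * θ₃ * I)) * (1 - exp (2 * θ₄ * I))) =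
      ((Real.sin θ₁ * Real.sin θ₂ / (Real.sin θ₃ * Real.sin θ₄) : ℝ) : ℂ) := by
  have h_phase : exp (θ₁ * I) * exp (θ₂ * I) = exp (θ₃ * I) * exp (θ₄ * I) := by
    rw [← exp_add, ← exp_add, ← add_mul, ← add_mul, ← ofReal_add, ← ofReal_add, hθ]
  have h_phase_ne : exp (θ₃ * I) * exp (θ₄ * I) ≠ 0 := mul_ne_zero (exp_ne_zero _) (exp_ne_zero _)
  simp only [one_sub_exp_two_mul_I]
  calc _ = (-2 * I) ^ 2 * (Real.sin θ₁ * Real.sin θ₂) * (exp (θ₁ * I) * exp (θ₂ * I)) /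
          ((-2 * I) ^ 2 * (Real.sin θ₃ * Real.sin θ₄) * (exp (θ₃ * I) * exp (θ₄ * I))) := by
        ring
    _ = _ := by
        rw [h_phase, mul_div_mul_right _ _ h_phase_ne, mul_div_mul_left _ _ (by simp)]
        push_cast; rfl

lemma Real.sin_mul_sin_lt_sin_mul_sin {a b c d : ℝ} (hsum : a + b = c + d)
    (hab : 0 ≤ b - a) (hlt : b - a < d - c) (hcd : d - c ≤ Real.pi) :
    sin c * sin d < sin a * sin b := by
  have h_prod (x y : ℝ) : sin x * sin y = (cos (y - x) - cos (x + y)) / 2 := by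
    rw [cos_sub, cos_add]; ring
  have := cos_lt_cos_of_nonneg_of_le_pi hab hcd hlt
  rw [h_prod, h_prod, hsum]
  linarith

lemma sin_mul_sin_lt_sin_mul_sin_of_nat {m k1 k2 k3 k4 : ℕ} (h31 : k3 < k1) (h12 : k1 ≤ k2)
    (h4m : k4 ≤ m) (hsum : k1 + k2 = k3 + k4) :
    Real.sin (Real.pi * k3 / m) * Real.sin (Real.pi * k4 / m) <
      Real.sin (Real.pi * k1 / m) * Real.sin (Real.pi * k2 / m) := by
  have hm : (0 : ℝ) < m := by norm_cast; omega
  have hsumR : (k1 : ℝ) + k2 = k3 + k4 := by exact_mod_cast hsum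
  have h31R : (k3 : ℝ) < k1 := by exact_mod_cast h31
  have h12R : (k1 : ℝ) ≤ k2 := by exact_mod_cast h12
  have h4mR : (k4 : ℝ) ≤ m := by exact_mod_cast h4m
  have h_gap (i j : ℕ) : Real.pi * j / m - Real.pi * i / m = Real.pi * ((j : ℝ) - i) / m := by
    ring
  apply Real.sin_mul_sin_lt_sin_mul_sin (by rw [← add_div, ← add_div, ← mul_add, ← mul_add, hsumR])
    <;> simp only [h_gap]
  · exact div_nonneg (mul_nonneg Real.pi_pos.le (by linarith)) hm.le
  · gcongr
    linarith
  · rw [div_le_iff₀ hm]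
    gcongr
    linarith [(Nat.cast_nonneg (α := ℝ) k3)]

lemma sin_pi_mul_div_pos {m k : ℕ} (hk : 0 < k) (hkm : k < m) :
    0 < Real.sin (Real.pi * k / m) := by
  have hm : (0 : ℝ) < m := by norm_cast; omega
  apply Real.sin_pos_of_pos_of_lt_pi (by positivity)
  rw [div_lt_iff₀ hm]
  gcongr

theorem fm_real_and_gt_one_general (m k1 k2 k3 k4 : ℕ)
    (hk3 : 0 < k3) (h31 : k3 < k1) (h12 : k1 ≤ k2)
    (h4m : k4 ≤ m - 1) (hsum : k1 + k2 = k3 + k4) :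
    (fm m k1 k2 k3 k4).im = 0 ∧ 1 < (fm m k1 k2 k3 k4).re := by
  have h_eq : fm m k1 k2 k3 k4 =
      ((Real.sin (Real.pi * k1 / m) * Real.sin (Real.pi * k2 / m) /
        (Real.sin (Real.pi * k3 / m) * Real.sin (Real.pi * k4 / m)) : ℝ) : ℂ) := by
    rw [fm, zetaC_pow, zetaC_pow, zetaC_pow, zetaC_pow]
    refine one_sub_exp_ratio_eq_sin_ratio ?_
    rw [← add_div, ← add_div, ← mul_add, ← mul_add]
    exact_mod_cast congrArg (fun n : ℕ => Real.pi * n / m) hsum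
  have h_denom_pos : 0 < Real.sin (Real.pi * k3 / m) * Real.sin (Real.pi * k4 / m) :=
    mul_pos (sin_pi_mul_div_pos hk3 (by omega)) (sin_pi_mul_div_pos (by omega) (by omega))
  rw [h_eq, Complex.ofReal_im, Complex.ofReal_re, one_lt_div h_denom_pos]
  exact ⟨rfl, sin_mul_sin_lt_sin_mul_sin_of_nat h31 h12 (by omega) hsum⟩

/-- For m ≥ 4 and (k₁,k₂,k₃,k₄) ∈ D_m, the value f_m(k₁,k₂,k₃,k₄) is a real number
greater than 1. -/
theorem fm_real_and_gt_one (m k1 k2 k3 k4 : ℕ) (hm : 4 ≤ m)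
    (hk3 : 0 < k3) (h31 : k3 < k1) (h12 : k1 ≤ k2) (h24 : k2 < k4)
    (h4m : k4 ≤ m - 1) (hsum : k1 + k2 = k3 + k4) :
    (fm m k1 k2 k3 k4).im = 0 ∧ 1 < (fm m k1 k2 k3 k4).re :=
  fm_real_and_gt_one_general m k1 k2 k3 k4 hk3 h31 h12 h4m hsum
end

section
/- Let a be a nonzero real number. If a = (1+x)/(1+y) where x and y are each either 0 or a complex root of unity, and y ≠ −1, then a ∈ {1/2, 1, 2}. -/
/-!
For `x, y` on the unit circle, conjugating `a * (1 + y) = 1 + x` (with `a` real) gives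
`a * (1 + y⁻¹) = 1 + x⁻¹`, that is `a * (1 + y) * y⁻¹ = (1 + x) * x⁻¹`; comparing with the
original equation forces `x = y` and so `a = 1`. When exactly one of `x, y` is `0`, the other
is a real root of unity, hence `±1`, which leaves `a = 2` or `a = 1 / 2`.
-/

open ComplexConjugate

lemma Complex.ofReal_eq_one_or_eq_neg_one_of_pow_eq_one {r : ℝ} {n : ℕ} (hn : n ≠ 0)
    (h : (r : ℂ) ^ n = 1) : r = 1 ∨ r = -1 := by
  have hr : r ^ n = 1 := by exact_mod_cast h
  rcases pow_eq_one_iff_cases.mp hr with hn0 | hr1 | ⟨hr1, -⟩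
  exacts [absurd hn0 hn, .inl hr1, .inr hr1]

lemma Complex.eq_of_ofReal_mul_one_add_eq_one_add {u v : ℂ} (hu : ‖u‖ = 1) (hv : ‖v‖ = 1)
    {a : ℝ} (h : (a : ℂ) * (1 + v) = 1 + u) (hne : 1 + u ≠ 0) : u = v := by
  have hconj : (a : ℂ) * (1 + v⁻¹) = 1 + u⁻¹ := by
    simpa [Complex.inv_eq_conj hu, Complex.inv_eq_conj hv] using congrArg conj h
  have hu0 : u ≠ 0 := norm_ne_zero_iff.mp (by rw [hu]; exact one_ne_zero)
  have hv0 : v ≠ 0 := norm_ne_zero_iff.mp (by rw [hv]; exact one_ne_zero)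
  have hcancel : (1 + u) * v⁻¹ = (1 + u) * u⁻¹ :=
    calc (1 + u) * v⁻¹ = (a : ℂ) * (1 + v⁻¹) := by rw [← h]; field_simp; ring
      _ = (1 + u) * u⁻¹ := by rw [hconj]; field_simp; ring
  exact inv_injective (mul_left_cancel₀ hne hcancel).symm

theorem ratio_one_plus_roots_of_unity_general (a : ℝ) (ha : a ≠ 0) (x y : ℂ)
    (hx : x = 0 ∨ ∃ n : ℕ, 0 < n ∧ x ^ n = 1)
    (hy : y = 0 ∨ ∃ n : ℕ, 0 < n ∧ y ^ n = 1)
    (h : (a : ℂ) = (1 + x) / (1 + y)) :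
    a = 1 / 2 ∨ a = 1 ∨ a = 2 := by
  have haC : (a : ℂ) ≠ 0 := Complex.ofReal_ne_zero.mpr ha
  have hy1 : 1 + y ≠ 0 := fun hy1 => haC (by rw [h, hy1, div_zero])
  have key : (a : ℂ) * (1 + y) = 1 + x := by rw [h, div_mul_cancel₀ _ hy1]
  have hx1 : 1 + x ≠ 0 := key ▸ mul_ne_zero haC hy1
  rcases hx with rfl | ⟨m, hm, hxm⟩ <;> rcases hy with rfl | ⟨n, hn, hyn⟩
  · exact .inr (.inl (by exact_mod_cast (by simpa using key : (a : ℂ) = 1)))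
  · have hy_real : y = ((a⁻¹ - 1 : ℝ) : ℂ) := by
      push_cast
      field_simp
      linear_combination key
    rw [hy_real] at hyn hy1
    rcases Complex.ofReal_eq_one_or_eq_neg_one_of_pow_eq_one hn.ne' hyn with h1 | h1
    · left
      field_simp at h1
      linarith
    · exact absurd (by rw [h1]; push_cast; ring) hy1
  · have hx_real : x = ((a - 1 : ℝ) : ℂ) := by
      push_cast
      linear_combination -key
    rw [hx_real] at hxm
    rcases Complex.ofReal_eq_one_or_eq_neg_one_of_pow_eq_one hm.ne' hxm with h1 | h1
    · exact .inr (.inr (by linarith))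
    · exact absurd (by linarith) ha
  · obtain rfl : x = y := Complex.eq_of_ofReal_mul_one_add_eq_one_add
      (Complex.norm_eq_one_of_pow_eq_one hxm hm.ne') (Complex.norm_eq_one_of_pow_eq_one hyn hn.ne')
      key hx1
    exact .inr (.inl (by exact_mod_cast (mul_left_eq_self₀.mp key).resolve_right hy1))

/-- If a nonzero real number a equals (1+x)/(1+y), where x and y are each either 0
or a root of unity, and y ≠ −1, then a ∈ {1/2, 1, 2}. -/
theorem ratio_one_plus_roots_of_unity (a : ℝ) (ha : a ≠ 0) (x y : ℂ)
    (hx : x = 0 ∨ ∃ n : ℕ, 0 < n ∧ x ^ n = 1)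
    (hy : y = 0 ∨ ∃ n : ℕ, 0 < n ∧ y ^ n = 1)
    (hy1 : y ≠ -1)
    (h : (a : ℂ) = (1 + x) / (1 + y)) :
    a = 1 / 2 ∨ a = 1 ∨ a = 2 :=
  ratio_one_plus_roots_of_unity_general a ha x y hx hy h
end

section
/- Let K ⊆ ℂ be a subfield, m a positive integer, and ζ a root of unity with ζ^m ∈ K and [K(ζ):K] = m−1. If a₀,…,a_{m−1}, b₀,…,b_{m−1} ∈ K satisfy Σᵢ aᵢζⁱ = Σᵢ bᵢζⁱ and at most m−1 of the 2m elements a₀,…,a_{m−1},b₀,…,b_{m−1} are nonzero, then aᵢ = bᵢ for all i. -/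
/-!
As a root of `X ^ m - ζ ^ m`, ζ has a minimal polynomial `μ` of degree `m - 1` with a linear
cofactor `X - ρ`, so `μ = ∑ ρ ^ (m - 1 - i) X ^ i` has all `m` coefficients nonzero. The
difference `∑ (aᵢ - bᵢ) X ^ i` vanishes at ζ and has degree `< m`, so it is a constant multiple
of `μ`: either zero, or with `m` nonzero coefficients, which the `aᵢ` and `bᵢ` cannot supply.
-/

open scoped Classical
open Polynomial

namespace Polynomial

variable {F : Type*} [Field F]

theorem exists_eq_mul_X_sub_C_of_dvd {μ q : F[X]} (hμ : μ.Monic) (hq : q.Monic)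
    (hdvd : μ ∣ q) (hdeg : μ.natDegree + 1 = q.natDegree) :
    ∃ ρ : F, q = μ * (X - C ρ) := by
  obtain ⟨g, rfl⟩ := hdvd
  have hg : g.Monic := hμ.of_mul_monic_left hq
  have hg1 : g.natDegree = 1 := by
    rw [hμ.natDegree_mul hg] at hdeg
    omega
  exact ⟨-g.coeff 0, by rw [map_neg, sub_neg_eq_add, ← hg.eq_X_add_C hg1]⟩

theorem eq_sum_of_X_pow_sub_C_eq_mul {μ : F[X]} {m : ℕ} {c ρ : F}
    (h : X ^ m - C c = μ * (X - C ρ)) :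
    μ = ∑ i ∈ Finset.range m, C (ρ ^ (m - 1 - i)) * X ^ i := by
  have hρ : ρ ^ m = c := by
    simpa [sub_eq_zero] using congrArg (eval ρ) h
  apply mul_right_cancel₀ (X_sub_C_ne_zero ρ)
  simp only [← h, C_pow, mul_comm (C ρ ^ _)]
  rw [geom_sum₂_mul, ← C_pow, hρ]

theorem coeff_ne_zero_of_dvd_X_pow_sub_C {μ : F[X]} {m : ℕ} {c : F} (hμ : μ.Monic)
    (hdvd : μ ∣ X ^ m - C c) (hdeg : μ.natDegree + 1 = m) (hc : c ≠ 0)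
    {i : ℕ} (hi : i ≤ μ.natDegree) : μ.coeff i ≠ 0 := by
  obtain ⟨ρ, hρ⟩ := exists_eq_mul_X_sub_C_of_dvd hμ (monic_X_pow_sub_C c (by omega)) hdvd
    (by rw [natDegree_X_pow_sub_C, hdeg])
  have hρ0 : ρ ≠ 0 := by
    rintro rfl
    simpa [hc, ← hdeg] using congrArg (eval 0) hρ
  rw [eq_sum_of_X_pow_sub_C_eq_mul hρ, finsetSum_coeff, Finset.sum_eq_single i]
  · rw [coeff_C_mul_X_pow, if_pos rfl]
    exact pow_ne_zero _ hρ0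
  · intro j _ hj
    rw [coeff_C_mul_X_pow, if_neg hj.symm]
  · rw [Finset.mem_range]
    omega

theorem eq_zero_or_forall_coeff_ne_zero_of_dvd {μ p : F[X]} (hμ : μ.Monic) (hdvd : μ ∣ p)
    (hdeg : p.natDegree ≤ μ.natDegree) (hcoeff : ∀ i ≤ μ.natDegree, μ.coeff i ≠ 0) :
    p = 0 ∨ ∀ i ≤ μ.natDegree, p.coeff i ≠ 0 := by
  refine or_iff_not_imp_left.2 fun hp i hi => ?_
  rw [eq_mul_leadingCoeff_of_monic_of_dvd_of_natDegree_le hμ hdvd hdeg, coeff_mul_C]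
  exact mul_ne_zero (hcoeff i hi) (leadingCoeff_ne_zero.2 hp)

theorem coeff_sum_fin_C_mul_X_pow {R : Type*} [Semiring R] {n : ℕ} (f : Fin n → R) (j : Fin n) :
    (∑ i : Fin n, C (f i) * X ^ (i : ℕ)).coeff j = f j := by
  rw [finsetSum_coeff, Finset.sum_eq_single j]
  · rw [coeff_C_mul_X_pow, if_pos rfl]
  · intro i _ hij
    rw [coeff_C_mul_X_pow, if_neg (Fin.val_injective.ne hij.symm)]
  · simp

end Polynomial

theorem minpoly.eq_zero_or_forall_ne_zero_of_sum_eq_zero {F E : Type*} [Field F] [Ring E]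
    [Algebra F E] {x : E} (hx : IsIntegral F x) {m : ℕ} (hm : (minpoly F x).natDegree + 1 = m)
    (hcoeff : ∀ i ≤ (minpoly F x).natDegree, (minpoly F x).coeff i ≠ 0) (c : Fin m → F)
    (hc : ∑ i, algebraMap F E (c i) * x ^ (i : ℕ) = 0) : c = 0 ∨ ∀ i, c i ≠ 0 := by
  have hp : Polynomial.aeval x (∑ i, C (c i) * X ^ (i : ℕ)) = 0 := by
    simpa using hc
  have hpdeg : (∑ i, C (c i) * X ^ (i : ℕ)).natDegree ≤ (minpoly F x).natDegree :=
    natDegree_le_of_degree_le (Order.le_of_lt_succ (hm ▸ degree_sum_fin_lt c))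
  refine (eq_zero_or_forall_coeff_ne_zero_of_dvd (minpoly.monic hx) (minpoly.dvd F x hp) hpdeg
    hcoeff).imp (fun hp0 => funext fun i => ?_) (fun hfull i => ?_)
  · rw [← coeff_sum_fin_C_mul_X_pow c i, hp0, coeff_zero, Pi.zero_apply]
  · rw [← coeff_sum_fin_C_mul_X_pow c i]
    exact hfull i (by omega)

theorem Fintype.card_le_card_ne_zero_add_card_ne_zero {ι M : Type*} [Fintype ι] [Zero M]
    {a b : ι → M} (hab : ∀ i, a i ≠ b i) :
    Fintype.card ι ≤ (Finset.univ.filter (fun i => a i ≠ 0)).card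
      + (Finset.univ.filter (fun i => b i ≠ 0)).card := by
  refine (Finset.card_le_card fun i _ => ?_).trans (Finset.card_union_le _ _)
  simp only [Finset.mem_union, Finset.mem_filter, Finset.mem_univ, true_and]
  by_contra! h
  exact hab i (h.1.trans h.2.symm)

theorem coeff_comparison_degree_sub_one_general (K : IntermediateField ℚ ℂ) (m : ℕ)
    (ζ : ℂ) (hζ : ∃ n : ℕ, 0 < n ∧ ζ ^ n = 1) (hζm : ζ ^ m ∈ K)
    (hdeg : Module.finrank K (IntermediateField.adjoin K {ζ}) = m - 1)
    (a b : Fin m → ℂ) (haK : ∀ i, a i ∈ K) (hbK : ∀ i, b i ∈ K)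
    (hcard : ((Finset.univ.filter (fun i => a i ≠ 0)).card
        + (Finset.univ.filter (fun i => b i ≠ 0)).card) ≤ m - 1)
    (hsum : ∑ i, a i * ζ ^ (i : ℕ) = ∑ i, b i * ζ ^ (i : ℕ)) :
    ∀ i, a i = b i := by
  obtain ⟨n, hn, hζn⟩ := hζ
  have hint : IsIntegral K ζ := .of_pow hn (hζn ▸ isIntegral_one)
  have hζ0 : ζ ≠ 0 := ne_zero_pow hn.ne' (hζn ▸ one_ne_zero)
  have hμm : (minpoly K ζ).natDegree + 1 = m := by
    have := minpoly.natDegree_pos hint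
    rw [← IntermediateField.adjoin.finrank hint, hdeg] at this ⊢
    omega
  have hμcoeff : ∀ i ≤ (minpoly K ζ).natDegree, (minpoly K ζ).coeff i ≠ 0 := fun i =>
    coeff_ne_zero_of_dvd_X_pow_sub_C (minpoly.monic hint)
      (minpoly.dvd K ζ (p := X ^ m - C ⟨ζ ^ m, hζm⟩) (by simp)) hμm
      (fun h => pow_ne_zero m hζ0 (congrArg Subtype.val h))
  let c : Fin m → K := fun i => ⟨a i - b i, sub_mem (haK i) (hbK i)⟩
  have hc : ∑ i, algebraMap K ℂ (c i) * ζ ^ (i : ℕ) = 0 := by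
    simp [c, sub_mul, hsum]
  rcases minpoly.eq_zero_or_forall_ne_zero_of_sum_eq_zero hint hμm hμcoeff c hc with hc0 | hfull
  · exact fun i => sub_eq_zero.1 (congrArg Subtype.val (congrFun hc0 i))
  · have hab : ∀ i, a i ≠ b i := fun i h => hfull i (Subtype.ext (sub_eq_zero.2 h))
    have := Fintype.card_le_card_ne_zero_add_card_ne_zero hab
    rw [Fintype.card_fin] at this
    omega

/-- Comparison of coefficients, case (b): if K ⊆ ℂ is a subfield, ζ a root of unity with
ζ^m ∈ K and [K(ζ):K] = m−1, and at most m−1 of the 2m coefficients are nonzero, then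
equal K-linear combinations of 1, ζ, …, ζ^{m−1} have equal coefficients. -/
theorem coeff_comparison_degree_sub_one (K : IntermediateField ℚ ℂ) (m : ℕ) (hm : 0 < m)
    (ζ : ℂ) (hζ : ∃ n : ℕ, 0 < n ∧ ζ ^ n = 1) (hζm : ζ ^ m ∈ K)
    (hdeg : Module.finrank K (IntermediateField.adjoin K {ζ}) = m - 1)
    (a b : Fin m → ℂ) (haK : ∀ i, a i ∈ K) (hbK : ∀ i, b i ∈ K)
    (hcard : ((Finset.univ.filter (fun i => a i ≠ 0)).card
        + (Finset.univ.filter (fun i => b i ≠ 0)).card) ≤ m - 1)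
    (hsum : ∑ i, a i * ζ ^ (i : ℕ) = ∑ i, b i * ζ ^ (i : ℕ)) :
    ∀ i, a i = b i :=
  coeff_comparison_degree_sub_one_general K m ζ hζ hζm hdeg a b haK hbK hcard hsum
end

section
/- Let K ⊆ ℂ be a subfield, m a positive integer, and ζ a root of unity with ζ^m ∈ K and [K(ζ):K] = m−1. If a₀,…,a_{m−1}, b₀,…,b_{m−1} ∈ K satisfy Σᵢ aᵢζⁱ = Σᵢ bᵢζⁱ and a_k ≠ b_k for some k, then |aᵢ − bᵢ| = |a_j − b_j| ≠ 0 for all i, j ∈ {0,…,m−1}. -/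
/-!
The minimal polynomial `p` of `ζ` divides `X ^ m - ζ ^ m` and has degree `m - 1`, so the cofactor
is `X - d` with `d ∈ K` and `d ^ m = ζ ^ m`; cancelling it from `X ^ m - d ^ m` gives
`p = ∑ d ^ (m - 1 - i) X ^ i`. A relation `∑ cᵢ ζ ^ i = 0` of degree `< m` is a `K`-multiple `v • p`,
so `cᵢ = v d ^ (m - 1 - i)`, and `|d| = |ζ| = 1` makes all `|cᵢ| = |v|`.
-/

open Polynomial Finset

namespace Polynomial

theorem aeval_ofFn {R A : Type*} [CommSemiring R] [DecidableEq R] [Semiring A] [Algebra R A]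
    (x : A) {n : ℕ} (v : Fin n → R) :
    aeval x (ofFn n v) = ∑ i, algebraMap R A (v i) * x ^ (i : ℕ) := by
  simp only [ofFn_eq_sum_monomial, map_sum, aeval_monomial]

theorem coeff_sum_C_pow_mul_X_pow {R : Type*} [Semiring R] (d : R) {m j : ℕ} (hj : j < m) :
    (∑ i ∈ range m, C (d ^ (m - 1 - i)) * X ^ i).coeff j = d ^ (m - 1 - j) := by
  simp only [finsetSum_coeff, coeff_C_mul_X_pow, sum_ite_eq, mem_range, if_pos hj]

theorem exists_eq_geom_sum_of_dvd_X_pow_sub_C {R : Type*} [CommRing R] [IsDomain R]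
    {p : R[X]} {m : ℕ} {w : R} (hp : p.Monic) (hdeg : p.natDegree + 1 = m)
    (hdvd : p ∣ X ^ m - C w) :
    ∃ d : R, d ^ m = w ∧ p = ∑ i ∈ range m, C (d ^ (m - 1 - i)) * X ^ i := by
  obtain ⟨q, hq⟩ := hdvd
  have hXm : (X ^ m - C w : R[X]).Monic := monic_X_pow_sub_C w (by omega)
  have hqm : q.Monic := hp.of_mul_monic_left (hq ▸ hXm)
  have hq1 : q.natDegree = 1 := by
    have := hp.natDegree_mul hqm
    rw [← hq, natDegree_X_pow_sub_C] at this
    omega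
  set d := -q.coeff 0
  have hqd : q = X - C d := by rw [hqm.eq_X_add_C hq1, C_neg, sub_neg_eq_add]
  have hdm : d ^ m = w := by
    have := congrArg (eval d) hq
    simpa [hqd, sub_eq_zero] using this
  refine ⟨d, hdm, mul_right_cancel₀ (X_sub_C_ne_zero d) ?_⟩
  calc p * (X - C d) = X ^ m - C d ^ m := by rw [← hqd, ← hq, ← hdm, C_pow]
    _ = _ := by simp only [← geom_sum₂_mul, C_pow, mul_comm]

end Polynomial

theorem exists_coeff_eq_mul_pow_of_sum_eq_zero {K L : Type*} [Field K] [Ring L] [Algebra K L]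
    {ζ : L} (hζ : IsIntegral K ζ) {m : ℕ} (hdeg : (minpoly K ζ).natDegree + 1 = m) {w : K}
    (hw : algebraMap K L w = ζ ^ m) :
    ∃ d : K, d ^ m = w ∧ ∀ c : Fin m → K, ∑ i, algebraMap K L (c i) * ζ ^ (i : ℕ) = 0 →
      ∃ v : K, ∀ i, c i = v * d ^ (m - 1 - i) := by
  classical
  have hdvd : minpoly K ζ ∣ X ^ m - C w := minpoly.dvd K ζ (by simp [hw])
  obtain ⟨d, hdm, hp⟩ :=
    exists_eq_geom_sum_of_dvd_X_pow_sub_C (minpoly.monic hζ) hdeg hdvd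
  refine ⟨d, hdm, fun c hc => ⟨(ofFn m c).leadingCoeff, fun i => ?_⟩⟩
  have hf : ofFn m c = C (ofFn m c).leadingCoeff * minpoly K ζ :=
    eq_leadingCoeff_mul_of_monic_of_dvd_of_natDegree_le (minpoly.monic hζ)
      (minpoly.dvd K ζ (by rw [aeval_ofFn, hc]))
      (by have := ofFn_natDegree_lt (by omega) c; omega)
  have := congrArg (coeff · i) hf
  simp only [ofFn_coeff_eq_val_of_lt c i.isLt, coeff_C_mul] at this
  rwa [hp, coeff_sum_C_pow_mul_X_pow d i.isLt] at this

/-- Comparison of coefficients, additional statement: if K ⊆ ℂ is a subfield, ζ a root of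
unity with ζ^m ∈ K and [K(ζ):K] = m−1, and two K-linear combinations of 1, ζ, …, ζ^{m−1}
are equal but some pair of coefficients differs, then all coefficient differences have the
same nonzero absolute value. -/
theorem coeff_comparison_diff_abs (K : IntermediateField ℚ ℂ) (m : ℕ) (hm : 0 < m)
    (ζ : ℂ) (hζ : ∃ n : ℕ, 0 < n ∧ ζ ^ n = 1) (hζm : ζ ^ m ∈ K)
    (hdeg : Module.finrank K (IntermediateField.adjoin K {ζ}) = m - 1)
    (a b : Fin m → ℂ) (haK : ∀ i, a i ∈ K) (hbK : ∀ i, b i ∈ K)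
    (hsum : ∑ i, a i * ζ ^ (i : ℕ) = ∑ i, b i * ζ ^ (i : ℕ))
    (k : Fin m) (hk : a k ≠ b k) :
    ∀ i j : Fin m, ‖a i - b i‖ = ‖a j - b j‖
      ∧ ‖a i - b i‖ ≠ 0 := by
  obtain ⟨n, hn, hζn⟩ := hζ
  have hint : IsIntegral K ζ := .of_pow hn (hζn ▸ isIntegral_one)
  rw [IntermediateField.adjoin.finrank hint] at hdeg
  obtain ⟨d, hdm, hrel⟩ :=
    exists_coeff_eq_mul_pow_of_sum_eq_zero hint (by omega) (w := ⟨ζ ^ m, hζm⟩) rfl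
  obtain ⟨v, hv⟩ := hrel (fun i => ⟨a i - b i, sub_mem (haK i) (hbK i)⟩) (by
    simp only [IntermediateField.algebraMap_apply, sub_mul, sum_sub_distrib, hsum, sub_self])
  have hdiff (i : Fin m) : a i - b i = v * (d : ℂ) ^ (m - 1 - i) := congrArg Subtype.val (hv i)
  have hd : ‖(d : ℂ)‖ = 1 := by
    have : ‖(d : ℂ)‖ ^ m = 1 := by
      rw [← norm_pow, ← IntermediateField.coe_pow, hdm]
      simp only [norm_pow, Complex.norm_eq_one_of_pow_eq_one hζn hn.ne', one_pow]
    exact (pow_eq_one_iff_of_nonneg (norm_nonneg _) hm.ne').mp this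
  have habs (i : Fin m) : ‖a i - b i‖ = ‖(v : ℂ)‖ := by
    rw [hdiff, norm_mul, norm_pow, hd, one_pow, mul_one]
  have hv0 : ‖(v : ℂ)‖ ≠ 0 := by
    rw [← habs k, norm_ne_zero_iff, sub_ne_zero]
    exact hk
  exact fun i j => ⟨(habs i).trans (habs j).symm, habs i ▸ hv0⟩
end

section
/- Let K ⊆ ℂ be a subfield, m ≥ 3 an integer, and ζ a root of unity with ζ^m ∈ K and [K(ζ):K] = m. Let ω₁,ω₂,ω₃,ω₄ be roots of unity lying in K and k₁,k₂,k₃,k₄ ∈ {0,…,m−1} with gcd(kᵢ,m) = 1 for some i, k₁+k₂ ≡ k₃+k₄ (mod m), ω₃ζ^{k₃} ≠ 1, ω₄ζ^{k₄} ≠ 1, and suppose a := ((1−ω₁ζ^{k₁})(1−ω₂ζ^{k₂}))/((1−ω₃ζ^{k₃})(1−ω₄ζ^{k₄})) lies in K and is a nonzero real number different from 1 and −1. Then a ∈ {1/2, 2}. -/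
/-!
Put `zᵢ = ωᵢ ζ^kᵢ`; these lie on the unit circle. Since `a` is real, conjugating
`a (1 - z₃)(1 - z₄) = (1 - z₁)(1 - z₂)` gives `z₁ z₂ = z₃ z₄`, and since `ζ^m ∈ K` both products
can be written `w ζ^s` with `w ∈ K` and `s = (k₁ + k₂) mod m`. Expanding the relation then gives a
`K`-linear relation between `1, ζ, …, ζ^(m-1)`, which are linearly independent because
`[K(ζ):K] = m`, so every coefficient vanishes. By symmetry (swapping the factors and replacing
`a` by `a⁻¹`) we may assume `gcd(k₁, m) = 1`, so that `k₁ ≠ 0` and `2k₁ ≢ 0 (mod m)`. Comparing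
coefficients when `k₂ = k₁` gives `1 - a + a ω = 0` with `|ω| = 1`, i.e. `a = 1/2`; when `k₂ = 0`
it gives `1 - a = ω₂`, i.e. `a = 2`; every other configuration of exponents leaves a relation
incompatible with `|ωᵢ| = 1` and `a ∉ {0, 1, -1}`.
-/

open Polynomial

theorem Polynomial.eq_zero_of_mem_lifts_of_eval_eq_zero {F E : Type*} [Field F] [Field E]
    [Algebra F E] {x : E} {p : E[X]} (hp : p ∈ lifts (algebraMap F E))
    (hdeg : p.degree < (minpoly F x).degree) (hx : p.eval x = 0) : p = 0 := by
  obtain ⟨q, rfl⟩ := (mem_lifts p).mp hp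
  rw [degree_map] at hdeg
  rw [eval_map_algebraMap] at hx
  rw [Polynomial.map_eq_zero]
  by_contra hq
  exact hdeg.not_ge (minpoly.degree_le_of_ne_zero F x hq hx)

theorem Nat.eq_mod_or_eq_mod_add_of_lt_two_mul {x m : ℕ} (h : x < 2 * m) :
    x = x % m ∨ x = x % m + m := by
  have hdiv := Nat.div_add_mod x m
  have : x / m < 2 := Nat.div_lt_of_lt_mul (by linarith)
  interval_cases x / m <;> omega

theorem ne_zero_of_norm_eq_one {E : Type*} [SeminormedAddGroup E] {z : E} (h : ‖z‖ = 1) :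
    z ≠ 0 :=
  ne_zero_of_norm_ne_zero (h.trans_ne one_ne_zero)

section UnitCircle

variable {a : ℝ}

theorem mul_eq_mul_of_ofReal_mul_eq {z₁ z₂ z₃ z₄ : ℂ} (h₁ : ‖z₁‖ = 1) (h₂ : ‖z₂‖ = 1)
    (h₃ : ‖z₃‖ = 1) (h₄ : ‖z₄‖ = 1) (hP : (1 - z₁) * (1 - z₂) ≠ 0)
    (h : a * ((1 - z₃) * (1 - z₄)) = (1 - z₁) * (1 - z₂)) : z₁ * z₂ = z₃ * z₄ := by
  have hc := congrArg (starRingEnd ℂ) h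
  simp only [map_mul, map_sub, map_one, Complex.conj_ofReal, ← Complex.inv_eq_conj h₁,
    ← Complex.inv_eq_conj h₂, ← Complex.inv_eq_conj h₃, ← Complex.inv_eq_conj h₄] at hc
  field_simp [ne_zero_of_norm_eq_one h₁, ne_zero_of_norm_eq_one h₂, ne_zero_of_norm_eq_one h₃,
    ne_zero_of_norm_eq_one h₄] at hc
  apply mul_left_cancel₀ hP
  linear_combination hc - z₁ * z₂ * h

theorem eq_zero_or_eq_one_of_one_sub_eq_mul_one_sub {ω ω' : ℂ} (hω : ‖ω‖ = 1)
    (hω' : ‖ω'‖ = 1) (hω'1 : ω' ≠ 1) (h : 1 - ω = a * (1 - ω')) : a = 0 ∨ a = 1 := by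
  have hc := congrArg (starRingEnd ℂ) h
  simp only [map_mul, map_sub, map_one, Complex.conj_ofReal, ← Complex.inv_eq_conj hω,
    ← Complex.inv_eq_conj hω'] at hc
  field_simp [ne_zero_of_norm_eq_one hω, ne_zero_of_norm_eq_one hω'] at hc
  have hsub : 1 - ω' ≠ 0 := sub_ne_zero.mpr hω'1.symm
  rcases eq_or_ne a 0 with ha | ha
  · exact .inl ha
  have heq : ω = ω' := by
    apply mul_left_cancel₀ (mul_ne_zero (Complex.ofReal_ne_zero.mpr ha) hsub)
    linear_combination hc + ω' * h
  subst heq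
  refine .inr (Complex.ofReal_injective (mul_right_cancel₀ hsub ?_))
  push_cast
  linear_combination -h

theorem eq_half_of_one_sub_add_mul_eq_zero {ω : ℂ} (hω : ‖ω‖ = 1) (h : 1 - a + a * ω = 0) :
    a = 1 / 2 := by
  have hn := congrArg norm (show (a : ℂ) * ω = ((a - 1 : ℝ) : ℂ) by
    push_cast; linear_combination h)
  rw [norm_mul, hω, Complex.norm_real, Complex.norm_real, mul_one, Real.norm_eq_abs,
    Real.norm_eq_abs] at hn
  rcases abs_eq_abs.mp hn with h | h <;> linarith

theorem eq_zero_or_eq_two_of_one_sub_eq {ω : ℂ} (hω : ‖ω‖ = 1) (h : 1 - a = ω) :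
    a = 0 ∨ a = 2 := by
  have hn := congrArg norm h
  rw [hω, ← Complex.ofReal_one, ← Complex.ofReal_sub, Complex.norm_real, Real.norm_eq_abs] at hn
  rcases abs_eq zero_le_one |>.mp hn with h | h
  · exact .inl (by linarith)
  · exact .inr (by linarith)

theorem eq_one_or_eq_neg_one_of_eq_mul {ω ω' : ℂ} (hω : ‖ω‖ = 1) (hω' : ‖ω'‖ = 1)
    (h : ω = a * ω') : a = 1 ∨ a = -1 := by
  have hn := congrArg norm h
  rw [norm_mul, hω, hω', Complex.norm_real, mul_one, Real.norm_eq_abs, eq_comm] at hn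
  exact abs_eq zero_le_one |>.mp hn

end UnitCircle

/-- `(1 - ω₁X^k₁)(1 - ω₂X^k₂) - a(1 - ω₃X^k₃)(1 - ω₄X^k₄)`, with both `ω₁ω₂X^(k₁+k₂)` and
`ω₃ω₄X^(k₃+k₄)` replaced by `wX^s`. -/
noncomputable def ratioRelPoly (a : ℝ) (ω₁ ω₂ ω₃ ω₄ w : ℂ) (k₁ k₂ k₃ k₄ s : ℕ) : ℂ[X] :=
  C (1 - a : ℂ) + C (-ω₁) * X ^ k₁ + C (-ω₂) * X ^ k₂ + C (a * ω₃) * X ^ k₃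
    + C (a * ω₄) * X ^ k₄ + C ((1 - a) * w) * X ^ s

section RatioRelPoly

variable {a : ℝ} {ω₁ ω₂ ω₃ ω₄ w : ℂ} {m k₁ k₂ k₃ k₄ s : ℕ}

theorem coeff_ratioRelPoly (j : ℕ) : (ratioRelPoly a ω₁ ω₂ ω₃ ω₄ w k₁ k₂ k₃ k₄ s).coeff j =
    (if j = 0 then (1 - a : ℂ) else 0) + (if j = k₁ then -ω₁ else 0)
      + (if j = k₂ then -ω₂ else 0) + (if j = k₃ then a * ω₃ else 0)
      + (if j = k₄ then a * ω₄ else 0) + (if j = s then (1 - a) * w else 0) := by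
  simp only [ratioRelPoly, coeff_add, coeff_C, coeff_C_mul_X_pow]

theorem degree_ratioRelPoly_lt (hk₁ : k₁ < m) (hk₂ : k₂ < m) (hk₃ : k₃ < m) (hk₄ : k₄ < m)
    (hs : s < m) : (ratioRelPoly a ω₁ ω₂ ω₃ ω₄ w k₁ k₂ k₃ k₄ s).degree < m := by
  refine degree_lt_iff_coeff_zero _ _ |>.mpr fun j hj => ?_
  simp [coeff_ratioRelPoly, show j ≠ 0 by omega, show j ≠ k₁ by omega, show j ≠ k₂ by omega,
    show j ≠ k₃ by omega, show j ≠ k₄ by omega, show j ≠ s by omega]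

theorem ratioRelPoly_mem_lifts {K : IntermediateField ℚ ℂ} (ha : (a : ℂ) ∈ K) (h₁ : ω₁ ∈ K)
    (h₂ : ω₂ ∈ K) (h₃ : ω₃ ∈ K) (h₄ : ω₄ ∈ K) (hw : w ∈ K) :
    ratioRelPoly a ω₁ ω₂ ω₃ ω₄ w k₁ k₂ k₃ k₄ s ∈ lifts (algebraMap K ℂ) := by
  have hC {c : ℂ} (hc : c ∈ K) (k : ℕ) : C c * X ^ k ∈ lifts (algebraMap K ℂ) :=
    mul_mem (C_mem_lifts _ (⟨c, hc⟩ : K)) (X_pow_mem_lifts _ k)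
  have h1a : 1 - (a : ℂ) ∈ K := sub_mem (one_mem K) ha
  have h0 : C (1 - (a : ℂ)) ∈ lifts (algebraMap K ℂ) := C_mem_lifts _ (⟨_, h1a⟩ : K)
  exact add_mem (add_mem (add_mem (add_mem (add_mem h0
    (hC (neg_mem h₁) k₁)) (hC (neg_mem h₂) k₂)) (hC (mul_mem ha h₃) k₃))
    (hC (mul_mem ha h₄) k₄)) (hC (mul_mem h1a hw) s)

theorem ratioRelPoly_eq_zero {K : IntermediateField ℚ ℂ} {ζ : ℂ}
    (hdeg : (minpoly K ζ).degree = m) (ha : (a : ℂ) ∈ K) (h₁ : ω₁ ∈ K) (h₂ : ω₂ ∈ K)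
    (h₃ : ω₃ ∈ K) (h₄ : ω₄ ∈ K) (hw : w ∈ K) (hk₁ : k₁ < m) (hk₂ : k₂ < m) (hk₃ : k₃ < m)
    (hk₄ : k₄ < m) (hs : s < m)
    (hE : (a : ℂ) * ((1 - ω₃ * ζ ^ k₃) * (1 - ω₄ * ζ ^ k₄))
      = (1 - ω₁ * ζ ^ k₁) * (1 - ω₂ * ζ ^ k₂))
    (h₁₂ : ω₁ * ζ ^ k₁ * (ω₂ * ζ ^ k₂) = w * ζ ^ s)
    (h₃₄ : ω₃ * ζ ^ k₃ * (ω₄ * ζ ^ k₄) = w * ζ ^ s) :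
    ratioRelPoly a ω₁ ω₂ ω₃ ω₄ w k₁ k₂ k₃ k₄ s = 0 := by
  refine eq_zero_of_mem_lifts_of_eval_eq_zero (x := ζ) (ratioRelPoly_mem_lifts ha h₁ h₂ h₃ h₄ hw)
    (hdeg ▸ degree_ratioRelPoly_lt hk₁ hk₂ hk₃ hk₄ hs) ?_
  simp only [ratioRelPoly, eval_add, eval_mul, eval_C, eval_pow, eval_X]
  linear_combination -hE - h₁₂ + a * h₃₄

theorem eq_half_of_ratioRelPoly_eq_zero (hw : ‖w‖ = 1) (h₃ : ‖ω₃‖ = 1) (h₄ : ‖ω₄‖ = 1)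
    (hk₁ : k₁ ≠ 0) (hk₁m : k₁ < m) (h2k₁ : 2 * k₁ ≠ m) (hk₃ : k₃ < m) (hk₄ : k₄ < m)
    (hs : s < m) (hs₁₂ : k₁ + k₁ = s ∨ k₁ + k₁ = s + m) (hs₃₄ : k₃ + k₄ = s ∨ k₃ + k₄ = s + m)
    (ha1 : a ≠ 1) (h : ratioRelPoly a ω₁ ω₂ ω₃ ω₄ w k₁ k₁ k₃ k₄ s = 0) : a = 1 / 2 := by
  have hcoeff (j : ℕ) : (ratioRelPoly a ω₁ ω₂ ω₃ ω₄ w k₁ k₁ k₃ k₄ s).coeff j = 0 := by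
    rw [h, coeff_zero]
  have hs0 : s ≠ 0 := by omega
  have hsk₁ : s ≠ k₁ := by omega
  rcases eq_or_ne k₃ s with h3s | h3s
  · have hk₄ : k₄ = 0 := by omega
    exact eq_half_of_one_sub_add_mul_eq_zero h₄ <| by
      simpa [coeff_ratioRelPoly, hk₁.symm, h3s, hs0.symm, hk₄] using hcoeff 0
  rcases eq_or_ne k₄ s with h4s | h4s
  · have hk₃ : k₃ = 0 := by omega
    exact eq_half_of_one_sub_add_mul_eq_zero h₃ <| by
      simpa [coeff_ratioRelPoly, hk₁.symm, h4s, hs0.symm, hk₃] using hcoeff 0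
  have hcoeff_s : (1 - a : ℂ) * w = 0 := by
    simpa [coeff_ratioRelPoly, hs0, hsk₁, h3s.symm, h4s.symm] using hcoeff s
  exact absurd hcoeff_s <|
    mul_ne_zero (sub_ne_zero.mpr (mod_cast ha1.symm)) (ne_zero_of_norm_eq_one hw)

theorem eq_two_of_ratioRelPoly_eq_zero (h₂ : ‖ω₂‖ = 1) (h₃ : ‖ω₃‖ = 1) (h₄ : ‖ω₄‖ = 1)
    (hk₁ : k₁ ≠ 0) (hk₁m : k₁ < m) (hk₃ : k₃ < m) (hk₄ : k₄ < m) (hs : s < m)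
    (hs₁₂ : k₁ = s ∨ k₁ = s + m) (hs₃₄ : k₃ + k₄ = s ∨ k₃ + k₄ = s + m)
    (hne₃ : k₃ = 0 → ω₃ ≠ 1) (hne₄ : k₄ = 0 → ω₄ ≠ 1) (ha0 : a ≠ 0) (ha1 : a ≠ 1)
    (h : ratioRelPoly a ω₁ ω₂ ω₃ ω₄ w k₁ 0 k₃ k₄ s = 0) : a = 2 := by
  have hcoeff (j : ℕ) : (ratioRelPoly a ω₁ ω₂ ω₃ ω₄ w k₁ 0 k₃ k₄ s).coeff j = 0 := by
    rw [h, coeff_zero]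
  obtain rfl : k₁ = s := by omega
  rcases eq_or_ne k₃ k₄ with h34 | h34
  · have hk₃ : k₃ ≠ 0 := by omega
    have h0 : 1 - a + -ω₂ = 0 := by
      simpa [coeff_ratioRelPoly, hk₁.symm, hk₃.symm, ← h34] using hcoeff 0
    exact (eq_zero_or_eq_two_of_one_sub_eq h₂ (by linear_combination h0)).resolve_left ha0
  exfalso
  rcases eq_or_ne k₃ 0 with hk₃ | hk₃
  · have hk₄ : k₄ ≠ 0 := by omega
    have h0 : 1 - a + -ω₂ + a * ω₃ = 0 := by
      simpa [coeff_ratioRelPoly, hk₁.symm, hk₃, hk₄.symm] using hcoeff 0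
    rcases eq_zero_or_eq_one_of_one_sub_eq_mul_one_sub h₂ h₃ (hne₃ hk₃)
      (by linear_combination h0) with ha | ha
    exacts [ha0 ha, ha1 ha]
  rcases eq_or_ne k₄ 0 with hk₄ | hk₄
  · have h0 : 1 - a + -ω₂ + a * ω₄ = 0 := by
      simpa [coeff_ratioRelPoly, hk₁.symm, hk₃.symm, hk₄] using hcoeff 0
    rcases eq_zero_or_eq_one_of_one_sub_eq_mul_one_sub h₂ h₄ (hne₄ hk₄)
      (by linear_combination h0) with ha | ha
    exacts [ha0 ha, ha1 ha]
  have hk₃k₁ : k₃ ≠ k₁ := by omega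
  have hcoeff_k₃ : (a : ℂ) * ω₃ = 0 := by
    simpa [coeff_ratioRelPoly, hk₃, hk₃k₁, h34] using hcoeff k₃
  exact mul_ne_zero (mod_cast ha0) (ne_zero_of_norm_eq_one h₃) hcoeff_k₃

theorem false_of_ratioRelPoly_eq_zero (h₁ : ‖ω₁‖ = 1) (h₃ : ‖ω₃‖ = 1) (h₄ : ‖ω₄‖ = 1)
    (hk₁ : k₁ ≠ 0) (hk₂ : k₂ ≠ 0) (hk₂k₁ : k₂ ≠ k₁) (hk₁m : k₁ < m) (hk₂m : k₂ < m)
    (hs₁₂ : k₁ + k₂ = s ∨ k₁ + k₂ = s + m) (hs₃₄ : k₃ + k₄ = s ∨ k₃ + k₄ = s + m)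
    (ha1 : a ≠ 1) (ham1 : a ≠ -1) (h : ratioRelPoly a ω₁ ω₂ ω₃ ω₄ w k₁ k₂ k₃ k₄ s = 0) :
    False := by
  have hcoeff : (ratioRelPoly a ω₁ ω₂ ω₃ ω₄ w k₁ k₂ k₃ k₄ s).coeff k₁ = 0 := by
    rw [h, coeff_zero]
  have hsk₁ : k₁ ≠ s := by omega
  have hω₁ : ω₁ = (if k₁ = k₃ then a * ω₃ else 0) + (if k₁ = k₄ then a * ω₄ else 0) := by
    rw [coeff_ratioRelPoly] at hcoeff
    simp only [if_neg hk₁, if_neg hk₂k₁.symm, if_neg hsk₁, if_true, zero_add, add_zero] at hcoeff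
    linear_combination -hcoeff
  split_ifs at hω₁ with hk₃ hk₄ hk₄
  · omega
  · exact (eq_one_or_eq_neg_one_of_eq_mul h₁ h₃ (by simpa using hω₁)).elim ha1 ham1
  · exact (eq_one_or_eq_neg_one_of_eq_mul h₁ h₄ (by simpa using hω₁)).elim ha1 ham1
  · exact ne_zero_of_norm_eq_one h₁ (by simpa using hω₁)

theorem half_or_two_of_ratioRelPoly_eq_zero (hw : ‖w‖ = 1) (h₁ : ‖ω₁‖ = 1) (h₂ : ‖ω₂‖ = 1)
    (h₃ : ‖ω₃‖ = 1) (h₄ : ‖ω₄‖ = 1) (hk₁ : k₁ ≠ 0) (h2k₁ : 2 * k₁ ≠ m) (hk₁m : k₁ < m)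
    (hk₂m : k₂ < m) (hk₃ : k₃ < m) (hk₄ : k₄ < m) (hs : s < m)
    (hs₁₂ : k₁ + k₂ = s ∨ k₁ + k₂ = s + m) (hs₃₄ : k₃ + k₄ = s ∨ k₃ + k₄ = s + m)
    (hne₃ : k₃ = 0 → ω₃ ≠ 1) (hne₄ : k₄ = 0 → ω₄ ≠ 1) (ha0 : a ≠ 0) (ha1 : a ≠ 1)
    (ham1 : a ≠ -1) (h : ratioRelPoly a ω₁ ω₂ ω₃ ω₄ w k₁ k₂ k₃ k₄ s = 0) :
    a = 1 / 2 ∨ a = 2 := by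
  rcases eq_or_ne k₂ k₁ with rfl | hk₂k₁
  · exact .inl <| eq_half_of_ratioRelPoly_eq_zero hw h₃ h₄ hk₁ hk₁m h2k₁ hk₃ hk₄ hs hs₁₂ hs₃₄
      ha1 h
  rcases eq_or_ne k₂ 0 with rfl | hk₂
  · exact .inr <| eq_two_of_ratioRelPoly_eq_zero h₂ h₃ h₄ hk₁ hk₁m hk₃ hk₄ hs hs₁₂ hs₃₄
      hne₃ hne₄ ha0 ha1 h
  · exact (false_of_ratioRelPoly_eq_zero h₁ h₃ h₄ hk₁ hk₂ hk₂k₁ hk₁m hk₂m hs₁₂ hs₃₄ ha1 ham1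
      h).elim

end RatioRelPoly

section Coprime

variable {K : IntermediateField ℚ ℂ} {m : ℕ} {ζ : ℂ} {ω₁ ω₂ ω₃ ω₄ : ℂ} {k₁ k₂ k₃ k₄ : ℕ}
  {a : ℝ}

theorem half_or_two_of_coprime_left (hm : 3 ≤ m) (hζ : ∃ n : ℕ, 0 < n ∧ ζ ^ n = 1)
    (hζm : ζ ^ m ∈ K) (hdeg : Module.finrank K (IntermediateField.adjoin K {ζ}) = m)
    (hω₁ : ω₁ ∈ K ∧ ∃ n : ℕ, 0 < n ∧ ω₁ ^ n = 1) (hω₂ : ω₂ ∈ K ∧ ∃ n : ℕ, 0 < n ∧ ω₂ ^ n = 1)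
    (hω₃ : ω₃ ∈ K ∧ ∃ n : ℕ, 0 < n ∧ ω₃ ^ n = 1) (hω₄ : ω₄ ∈ K ∧ ∃ n : ℕ, 0 < n ∧ ω₄ ^ n = 1)
    (hk₁ : k₁ < m) (hk₂ : k₂ < m) (hk₃ : k₃ < m) (hk₄ : k₄ < m) (hg : Nat.gcd k₁ m = 1)
    (hmod : (k₁ + k₂) % m = (k₃ + k₄) % m) (hne₃ : ω₃ * ζ ^ k₃ ≠ 1) (hne₄ : ω₄ * ζ ^ k₄ ≠ 1)
    (ha0 : a ≠ 0) (ha1 : a ≠ 1) (ham1 : a ≠ -1) (haK : (a : ℂ) ∈ K)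
    (hE : (a : ℂ) * ((1 - ω₃ * ζ ^ k₃) * (1 - ω₄ * ζ ^ k₄))
      = (1 - ω₁ * ζ ^ k₁) * (1 - ω₂ * ζ ^ k₂)) :
    a = 1 / 2 ∨ a = 2 := by
  have hnorm {z : ℂ} (hz : ∃ n : ℕ, 0 < n ∧ z ^ n = 1) : ‖z‖ = 1 :=
    let ⟨_, hn, h⟩ := hz; Complex.norm_eq_one_of_pow_eq_one h hn.ne'
  have hnorm_mul {ω : ℂ} (hω : ∃ n : ℕ, 0 < n ∧ ω ^ n = 1) (k : ℕ) : ‖ω * ζ ^ k‖ = 1 := by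
    rw [norm_mul, norm_pow, hnorm hω, hnorm hζ, one_pow, one_mul]
  have hP : (1 - ω₁ * ζ ^ k₁) * (1 - ω₂ * ζ ^ k₂) ≠ 0 := by
    rw [← hE]
    exact mul_ne_zero (mod_cast ha0)
      (mul_ne_zero (sub_ne_zero.mpr hne₃.symm) (sub_ne_zero.mpr hne₄.symm))
  have hrel := mul_eq_mul_of_ofReal_mul_eq (hnorm_mul hω₁.2 k₁) (hnorm_mul hω₂.2 k₂)
    (hnorm_mul hω₃.2 k₃) (hnorm_mul hω₄.2 k₄) hP hE
  set s := (k₁ + k₂) % m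
  set w := ω₁ * ω₂ * (ζ ^ m) ^ ((k₁ + k₂) / m)
  have hw₁₂ : ω₁ * ζ ^ k₁ * (ω₂ * ζ ^ k₂) = w * ζ ^ s := by
    rw [mul_mul_mul_comm, ← pow_add, ← Nat.div_add_mod (k₁ + k₂) m, pow_add, pow_mul]
    ring
  have hw : ‖w‖ = 1 := by simp [w, hnorm hω₁.2, hnorm hω₂.2, hnorm hζ]
  have hζint : IsIntegral K ζ :=
    let ⟨_, hn, h⟩ := hζ; IsIntegral.of_pow hn (h ▸ isIntegral_one)
  have hminpoly : (minpoly K ζ).degree = m := by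
    rw [degree_eq_natDegree (minpoly.ne_zero hζint), ← IntermediateField.adjoin.finrank hζint,
      hdeg]
  have hs : s < m := Nat.mod_lt _ (by omega)
  have hpoly := ratioRelPoly_eq_zero hminpoly haK hω₁.1 hω₂.1 hω₃.1 hω₄.1
    (mul_mem (mul_mem hω₁.1 hω₂.1) (pow_mem hζm _)) hk₁ hk₂ hk₃ hk₄ hs hE hw₁₂ (hrel ▸ hw₁₂)
  refine half_or_two_of_ratioRelPoly_eq_zero hw (hnorm hω₁.2) (hnorm hω₂.2) (hnorm hω₃.2)
    (hnorm hω₄.2) ?_ ?_ hk₁ hk₂ hk₃ hk₄ hs ?_ ?_ (fun h => by simpa [h] using hne₃)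
    (fun h => by simpa [h] using hne₄) ha0 ha1 ham1 hpoly
  · rintro rfl; rw [Nat.gcd_zero_left] at hg; omega
  · rintro rfl; rw [Nat.gcd_mul_left_right] at hg; omega
  · exact (k₁ + k₂).eq_mod_or_eq_mod_add_of_lt_two_mul (by omega)
  · rw [hmod]; exact (k₃ + k₄).eq_mod_or_eq_mod_add_of_lt_two_mul (by omega)

theorem half_or_two_of_coprime_right (hm : 3 ≤ m) (hζ : ∃ n : ℕ, 0 < n ∧ ζ ^ n = 1)
    (hζm : ζ ^ m ∈ K) (hdeg : Module.finrank K (IntermediateField.adjoin K {ζ}) = m)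
    (hω₁ : ω₁ ∈ K ∧ ∃ n : ℕ, 0 < n ∧ ω₁ ^ n = 1) (hω₂ : ω₂ ∈ K ∧ ∃ n : ℕ, 0 < n ∧ ω₂ ^ n = 1)
    (hω₃ : ω₃ ∈ K ∧ ∃ n : ℕ, 0 < n ∧ ω₃ ^ n = 1) (hω₄ : ω₄ ∈ K ∧ ∃ n : ℕ, 0 < n ∧ ω₄ ^ n = 1)
    (hk₁ : k₁ < m) (hk₂ : k₂ < m) (hk₃ : k₃ < m) (hk₄ : k₄ < m) (hg : Nat.gcd k₃ m = 1)
    (hmod : (k₁ + k₂) % m = (k₃ + k₄) % m) (hne₃ : ω₃ * ζ ^ k₃ ≠ 1) (hne₄ : ω₄ * ζ ^ k₄ ≠ 1)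
    (ha0 : a ≠ 0) (ha1 : a ≠ 1) (ham1 : a ≠ -1) (haK : (a : ℂ) ∈ K)
    (hE : (a : ℂ) * ((1 - ω₃ * ζ ^ k₃) * (1 - ω₄ * ζ ^ k₄))
      = (1 - ω₁ * ζ ^ k₁) * (1 - ω₂ * ζ ^ k₂)) :
    a = 1 / 2 ∨ a = 2 := by
  have hP : (1 - ω₁ * ζ ^ k₁) * (1 - ω₂ * ζ ^ k₂) ≠ 0 := by
    rw [← hE]
    exact mul_ne_zero (mod_cast ha0)
      (mul_ne_zero (sub_ne_zero.mpr hne₃.symm) (sub_ne_zero.mpr hne₄.symm))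
  have hne₁ : ω₁ * ζ ^ k₁ ≠ 1 := fun h => hP (by rw [h, sub_self, zero_mul])
  have hne₂ : ω₂ * ζ ^ k₂ ≠ 1 := fun h => hP (by rw [h, sub_self, mul_zero])
  have hE' : ((a⁻¹ : ℝ) : ℂ) * ((1 - ω₁ * ζ ^ k₁) * (1 - ω₂ * ζ ^ k₂))
      = (1 - ω₃ * ζ ^ k₃) * (1 - ω₄ * ζ ^ k₄) := by
    rw [← hE, Complex.ofReal_inv, inv_mul_cancel_left₀ (mod_cast ha0)]
  have hinvm1 : a⁻¹ ≠ -1 := by rwa [Ne, inv_eq_iff_eq_inv, inv_neg, inv_one]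
  have hinvK : ((a⁻¹ : ℝ) : ℂ) ∈ K := by rw [Complex.ofReal_inv]; exact inv_mem haK
  rcases half_or_two_of_coprime_left hm hζ hζm hdeg hω₃ hω₄ hω₁ hω₂ hk₃ hk₄ hk₁ hk₂ hg
    hmod.symm hne₁ hne₂ (inv_ne_zero ha0) (inv_ne_one.mpr ha1) hinvm1 hinvK hE' with h | h
  · exact .inr (by rw [← inv_inv a, h]; norm_num)
  · exact .inl (by rw [← inv_inv a, h]; norm_num)

end Coprime

/-- Lemma on quotients of products (1−ωζ^k), case (a): [K(ζ):K] = m with m ≥ 3. -/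
theorem ratio_in_half_two_full_degree (K : IntermediateField ℚ ℂ) (m : ℕ) (hm : 3 ≤ m)
    (ζ : ℂ) (hζ : ∃ n : ℕ, 0 < n ∧ ζ ^ n = 1) (hζm : ζ ^ m ∈ K)
    (hdeg : Module.finrank K (IntermediateField.adjoin K {ζ}) = m)
    (ω1 ω2 ω3 ω4 : ℂ)
    (hω1 : ω1 ∈ K ∧ ∃ n : ℕ, 0 < n ∧ ω1 ^ n = 1)
    (hω2 : ω2 ∈ K ∧ ∃ n : ℕ, 0 < n ∧ ω2 ^ n = 1)
    (hω3 : ω3 ∈ K ∧ ∃ n : ℕ, 0 < n ∧ ω3 ^ n = 1)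
    (hω4 : ω4 ∈ K ∧ ∃ n : ℕ, 0 < n ∧ ω4 ^ n = 1)
    (k1 k2 k3 k4 : ℕ) (hk1 : k1 ≤ m - 1) (hk2 : k2 ≤ m - 1) (hk3 : k3 ≤ m - 1)
    (hk4 : k4 ≤ m - 1)
    (hgcd : Nat.gcd k1 m = 1 ∨ Nat.gcd k2 m = 1 ∨ Nat.gcd k3 m = 1 ∨ Nat.gcd k4 m = 1)
    (hmod : (k1 + k2) % m = (k3 + k4) % m)
    (hne3 : ω3 * ζ ^ k3 ≠ 1) (hne4 : ω4 * ζ ^ k4 ≠ 1)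
    (a : ℝ) (ha0 : a ≠ 0) (ha1 : a ≠ 1) (ham1 : a ≠ -1) (haK : (a : ℂ) ∈ K)
    (haeq : (a : ℂ) = ((1 - ω1 * ζ ^ k1) * (1 - ω2 * ζ ^ k2))
        / ((1 - ω3 * ζ ^ k3) * (1 - ω4 * ζ ^ k4))) :
    a = 1 / 2 ∨ a = 2 := by
  obtain ⟨hk1', hk2', hk3', hk4'⟩ : k1 < m ∧ k2 < m ∧ k3 < m ∧ k4 < m := by omega
  have hE := (eq_div_iff <| mul_ne_zero (sub_ne_zero.mpr hne3.symm)
    (sub_ne_zero.mpr hne4.symm)).mp haeq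
  rcases hgcd with hg | hg | hg | hg
  · exact half_or_two_of_coprime_left hm hζ hζm hdeg hω1 hω2 hω3 hω4 hk1' hk2' hk3' hk4' hg
      hmod hne3 hne4 ha0 ha1 ham1 haK hE
  · exact half_or_two_of_coprime_left hm hζ hζm hdeg hω2 hω1 hω3 hω4 hk2' hk1' hk3' hk4' hg
      (by rwa [add_comm k2]) hne3 hne4 ha0 ha1 ham1 haK (by rw [hE]; ring)
  · exact half_or_two_of_coprime_right hm hζ hζm hdeg hω1 hω2 hω3 hω4 hk1' hk2' hk3' hk4' hg
      hmod hne3 hne4 ha0 ha1 ham1 haK hE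
  · exact half_or_two_of_coprime_right hm hζ hζm hdeg hω1 hω2 hω4 hω3 hk1' hk2' hk4' hk3' hg
      (by rwa [add_comm k4]) hne4 hne3 ha0 ha1 ham1 haK (by rw [← hE]; ring)
end

section
/- Let K ⊆ ℂ be a subfield, m ≥ 5 an integer, and ζ a root of unity with ζ^m ∈ K and [K(ζ):K] = m−1. Let ω₁,ω₂,ω₃,ω₄ be roots of unity lying in K and k₁,k₂,k₃,k₄ ∈ {0,…,m−1} with gcd(kᵢ,m) = 1 for some i, k₁+k₂ ≡ k₃+k₄ (mod m), ω₃ζ^{k₃} ≠ 1, ω₄ζ^{k₄} ≠ 1, and suppose a := ((1−ω₁ζ^{k₁})(1−ω₂ζ^{k₂}))/((1−ω₃ζ^{k₃})(1−ω₄ζ^{k₄})) lies in K and is a nonzero real number different from 1 and −1. Then a ∈ {1/2, 2}. -/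
/-!
By the symmetries `1 ↔ 2`, `3 ↔ 4` and numerator ↔ denominator (which replaces `a` by `a⁻¹`) we
may assume `k₁` coprime to `m`. Clearing denominators and using `k₁ + k₂ ≡ k₃ + k₄ ≡ s (mod m)`
and `ζ^m ∈ K` turns the hypothesis into `Q(ζ) = 0` for a polynomial `Q` over `K` of degree `< m`
supported on the exponents `0, k₁, k₂, k₃, k₄, s`. As `ζ` has degree `m - 1` and is a root of
`X^m - ζ^m`, its minimal polynomial is `(X^m - η^m)/(X - η) = ∑ η^{m-1-j} X^j` for some `η ∈ K`
with `|η| = 1`, so `Q` is a multiple of it and its coefficients `Q_0, …, Q_{m-1}` all have the same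
absolute value. If they all vanish, the coefficient at `0` or at `k₁` forces `a ∈ {1/2, 2}`. If
none vanishes, the six exponents take all `m ≥ 5` values below `m`, so at most one pair of them
coincides, and two coefficients each coming from a single term (`1 - a`, `-ω` or `aω`) have equal
absolute values, which again forces `a ∈ {1/2, 2}`, or `|a| = 1`.
-/

open Polynomial IntermediateField

theorem exists_coeff_eq_mul_coeff_succ_of_finrank_eq_sub_one {K L : Type*} [Field K] [Field L]
    [Algebra K L] {ζ : L} {m : ℕ} (hm : m ≠ 0) {β : K} (hβ : algebraMap K L β = ζ ^ m)
    (hdeg : Module.finrank K K⟮ζ⟯ = m - 1) :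
    ∃ η : K, η ^ m = β ∧ ∀ R : K[X], R.degree < m → aeval ζ R = 0 →
      ∀ j, j + 1 < m → R.coeff j = η * R.coeff (j + 1) := by
  set p : K[X] := X ^ m - C β
  have hp : p.Monic := monic_X_pow_sub_C β hm
  have hpζ : aeval ζ p = 0 := by simp [p, hβ]
  have hint : IsIntegral K ζ := ⟨p, hp, by rwa [← aeval_def]⟩
  have hf₀ := minpoly.ne_zero hint
  have hf : (minpoly K ζ).natDegree = m - 1 := by rw [← adjoin.finrank hint, hdeg]
  obtain ⟨g, hfg⟩ := minpoly.dvd K ζ hpζ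
  have hg : g.Monic := (minpoly.monic hint).of_mul_monic_left (hfg ▸ hp)
  have hgX : g = X + C (g.coeff 0) := by
    refine hg.eq_X_add_C ?_
    have := natDegree_mul hf₀ hg.ne_zero
    rw [← hfg, natDegree_X_pow_sub_C, hf] at this
    omega
  refine ⟨-g.coeff 0, ?_, fun R hR hRζ j hj => ?_⟩
  · have : p.eval (-g.coeff 0) = 0 := by rw [hfg, eval_mul, hgX]; simp
    simpa [p, sub_eq_zero] using this
  · obtain ⟨d, rfl⟩ := minpoly.dvd K ζ hRζ
    have hd : d = C (d.coeff 0) := by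
      rcases eq_or_ne d 0 with rfl | hd₀
      · simp
      apply eq_C_of_natDegree_eq_zero
      have := natDegree_mul hf₀ hd₀
      have := (natDegree_lt_iff_degree_lt (mul_ne_zero hf₀ hd₀)).2 hR
      omega
    -- `R = minpoly * d` with `d` constant and `minpoly * (X - η) = X^m - β`: compare the
    -- coefficients of `R * (X - η) = (X^m - β) * d`
    have hRg : minpoly K ζ * d * g = p * C (d.coeff 0) := by rw [hfg, ← hd]; ring
    have := congrArg (coeff · (j + 1)) hRg
    rw [hgX] at this
    simp only [mul_add, coeff_add, coeff_mul_X, coeff_mul_C, coeff_sub, coeff_X_pow, hj.ne,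
      ↓reduceIte, coeff_C_succ, sub_self, zero_mul, p] at this
    linear_combination this

theorem norm_coeff_eq_of_eval_eq_zero {K : Type*} [Field K] [Algebra K ℂ] {ζ : ℂ} (hζ : ‖ζ‖ = 1)
    {m : ℕ} (hm : m ≠ 0) (hζm : ζ ^ m ∈ Set.range (algebraMap K ℂ))
    (hdeg : Module.finrank K K⟮ζ⟯ = m - 1) {Q : ℂ[X]} (hQK : Q ∈ lifts (algebraMap K ℂ))
    (hQ : Q.degree < m) (hQζ : Q.eval ζ = 0) {i j : ℕ} (hi : i < m) (hj : j < m) :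
    ‖Q.coeff i‖ = ‖Q.coeff j‖ := by
  obtain ⟨R, rfl, hRdeg⟩ := exists_degree_eq_of_mem_lifts hQK
  obtain ⟨β, hβ⟩ := hζm
  obtain ⟨η, hηβ, hrec⟩ := exists_coeff_eq_mul_coeff_succ_of_finrank_eq_sub_one hm hβ hdeg
  have hη : ‖algebraMap K ℂ η‖ = 1 := by
    refine (pow_left_inj₀ (norm_nonneg _) zero_le_one hm).1 ?_
    rw [← norm_pow, ← map_pow, hηβ, hβ, norm_pow, hζ]
  rw [eval_map_algebraMap] at hQζ
  have hle : ∀ i j, i ≤ j → j < m →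
      ‖(R.map (algebraMap K ℂ)).coeff i‖ = ‖(R.map (algebraMap K ℂ)).coeff j‖ := by
    intro i j hij hj
    induction j, hij using Nat.le_induction with
    | base => rfl
    | succ n _ ih =>
      rw [ih (by omega), coeff_map, coeff_map, hrec R (hRdeg ▸ hQ) hQζ n hj, map_mul, norm_mul, hη,
        one_mul]
  rcases le_total i j with h | h
  exacts [hle i j h hj, (hle j i h hi).symm]

theorem eq_one_of_one_sub_eq_ofReal_mul {a : ℝ} (ha₀ : a ≠ 0) (ha₁ : a ≠ 1) {ω ω' : ℂ}
    (hω : ‖ω‖ = 1) (hω' : ‖ω'‖ = 1) (h : 1 - ω = a * (1 - ω')) : ω' = 1 := by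
  by_contra hne
  have hω₀ : ω ≠ 0 := norm_ne_zero_iff.1 (by simp [hω])
  have hω'₀ : ω' ≠ 0 := norm_ne_zero_iff.1 (by simp [hω'])
  -- conjugation inverts `ω` and `ω'` and fixes `a`
  have hconj := congrArg (starRingEnd ℂ) h
  simp only [map_sub, map_mul, map_one, Complex.conj_ofReal, ← Complex.inv_eq_conj hω,
    ← Complex.inv_eq_conj hω'] at hconj
  field_simp at hconj
  have hprod : (a : ℂ) * (ω' - 1) * (ω' - ω) = 0 := by linear_combination hconj + ω' * h
  obtain rfl : ω' = ω := by simpa [sub_eq_zero, ha₀, hne] using hprod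
  have : ((a : ℂ) - 1) * (1 - ω') = 0 := by linear_combination -h
  simp [sub_eq_zero, ha₁, Ne.symm hne] at this

theorem eq_two_of_norm_one_sub_ofReal_eq_one {a : ℝ} (ha : a ≠ 0) (h : ‖1 - (a : ℂ)‖ = 1) :
    a = 2 := by
  rw [← Complex.ofReal_one, ← Complex.ofReal_sub, Complex.norm_real, Real.norm_eq_abs] at h
  rcases (abs_eq zero_le_one).1 h with h | h
  · exact absurd (by linarith) ha
  · linarith

theorem eq_half_of_norm_one_sub_ofReal_eq_abs {a : ℝ} (h : ‖1 - (a : ℂ)‖ = |a|) : a = 1 / 2 := by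
  rw [← Complex.ofReal_one, ← Complex.ofReal_sub, Complex.norm_real, Real.norm_eq_abs] at h
  have := sq_abs (1 - a)
  rw [h, sq_abs] at this
  linarith

theorem Nat.add_eq_mod_or_eq_mod_add {x y m : ℕ} (hx : x < m) (hy : y < m) :
    x + y = (x + y) % m ∨ x + y = (x + y) % m + m := by
  rcases lt_or_ge (x + y) m with h | h
  · exact .inl (Nat.mod_eq_of_lt h).symm
  · rw [Nat.mod_eq_sub_mod h, Nat.mod_eq_of_lt (by omega)]
    omega

theorem Nat.exists_ne_of_forall_lt {m : ℕ} (hm : 5 ≤ m) {P : ℕ → Prop} (hP : ∀ j < m, P j)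
    (t₁ t₂ t₃ t₄ : ℕ) : ∃ j, P j ∧ j ≠ t₁ ∧ j ≠ t₂ ∧ j ≠ t₃ ∧ j ≠ t₄ := by
  by_contra! h
  have : Finset.range m ⊆ {t₁, t₂, t₃, t₄} := fun j hj => by
    have := h j (hP j (Finset.mem_range.1 hj))
    simp only [Finset.mem_insert, Finset.mem_singleton]
    tauto
  have := (Finset.card_le_card this).trans Finset.card_le_four
  rw [Finset.card_range] at this
  omega

/-- `(1 - ω₁X^{k₁})(1 - ω₂X^{k₂}) - a(1 - ω₃X^{k₃})(1 - ω₄X^{k₄})`, once its two top terms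
`ω₁ω₂X^{k₁+k₂} - aω₃ω₄X^{k₃+k₄}` are reduced modulo `X^m - ζ^m` to a single term `w X^s`. -/
noncomputable def relationPoly (a : ℝ) (ω₁ ω₂ ω₃ ω₄ w : ℂ) (k₁ k₂ k₃ k₄ s : ℕ) : ℂ[X] :=
  C (1 - (a : ℂ)) - C ω₁ * X ^ k₁ - C ω₂ * X ^ k₂ + C (a * ω₃) * X ^ k₃ + C (a * ω₄) * X ^ k₄ +
    C w * X ^ s

section relationPoly

variable {a : ℝ} {ω₁ ω₂ ω₃ ω₄ w : ℂ} {m k₁ k₂ k₃ k₄ s : ℕ}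

theorem coeff_relationPoly (j : ℕ) :
    (relationPoly a ω₁ ω₂ ω₃ ω₄ w k₁ k₂ k₃ k₄ s).coeff j =
      (if j = 0 then 1 - (a : ℂ) else 0) - (if j = k₁ then ω₁ else 0) -
        (if j = k₂ then ω₂ else 0) + (if j = k₃ then a * ω₃ else 0) +
          (if j = k₄ then a * ω₄ else 0) + (if j = s then w else 0) := by
  simp only [relationPoly, coeff_add, coeff_sub, coeff_C, coeff_C_mul_X_pow]

theorem degree_relationPoly_lt (hk₁ : k₁ < m) (hk₂ : k₂ < m) (hk₃ : k₃ < m) (hk₄ : k₄ < m)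
    (hs : s < m) : (relationPoly a ω₁ ω₂ ω₃ ω₄ w k₁ k₂ k₃ k₄ s).degree < m := by
  refine (degree_lt_iff_coeff_zero _ _).2 fun j hj => ?_
  simp (disch := omega) only [coeff_relationPoly, if_neg]
  ring

theorem relationPoly_mem_lifts (K : IntermediateField ℚ ℂ) (ha : (a : ℂ) ∈ K) (hω₁ : ω₁ ∈ K)
    (hω₂ : ω₂ ∈ K) (hω₃ : ω₃ ∈ K) (hω₄ : ω₄ ∈ K) (hw : w ∈ K) :
    relationPoly a ω₁ ω₂ ω₃ ω₄ w k₁ k₂ k₃ k₄ s ∈ lifts (algebraMap K ℂ) := by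
  refine (mem_lifts _).2 ⟨C ⟨1 - a, sub_mem (one_mem K) ha⟩ - C ⟨ω₁, hω₁⟩ * X ^ k₁ -
    C ⟨ω₂, hω₂⟩ * X ^ k₂ + C ⟨a * ω₃, mul_mem ha hω₃⟩ * X ^ k₃ +
    C ⟨a * ω₄, mul_mem ha hω₄⟩ * X ^ k₄ + C ⟨w, hw⟩ * X ^ s, ?_⟩
  simp [relationPoly]

theorem eq_half_or_two_of_forall_coeff_relationPoly_eq_zero (hk₁ : k₁ ≠ 0) (h2k₁ : 2 * k₁ ≠ m)
    (hk₁m : k₁ < m) (hk₂m : k₂ < m) (hsm : s < m)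
    (hs₁₂ : k₁ + k₂ = s ∨ k₁ + k₂ = s + m) (hs₃₄ : k₃ + k₄ = s ∨ k₃ + k₄ = s + m)
    (hω₁ : ‖ω₁‖ = 1) (hω₂ : ‖ω₂‖ = 1) (hω₃ : ‖ω₃‖ = 1) (hω₄ : ‖ω₄‖ = 1)
    (hne₃ : k₃ = 0 → ω₃ ≠ 1) (hne₄ : k₄ = 0 → ω₄ ≠ 1) (ha₀ : a ≠ 0) (ha₁ : a ≠ 1) (ha₁' : a ≠ -1)
    (hzero : ∀ j < m, (relationPoly a ω₁ ω₂ ω₃ ω₄ w k₁ k₂ k₃ k₄ s).coeff j = 0) :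
    a = 1 / 2 ∨ a = 2 := by
  have h₀ := hzero 0 (by omega)
  have h₁ := hzero k₁ hk₁m
  rw [coeff_relationPoly] at h₀ h₁
  obtain rfl | rfl | hk₂ : k₂ = 0 ∨ k₂ = k₁ ∨ (k₂ ≠ 0 ∧ k₂ ≠ k₁) := by omega
  · obtain rfl | hk₃ := eq_or_ne k₃ 0
    · simp (disch := omega) only [if_neg, ↓reduceIte] at h₀
      exact absurd (eq_one_of_one_sub_eq_ofReal_mul ha₀ ha₁ hω₂ hω₃ (by linear_combination h₀))
        (hne₃ rfl)
    obtain rfl | hk₄ := eq_or_ne k₄ 0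
    · simp (disch := omega) only [if_neg, ↓reduceIte] at h₀
      exact absurd (eq_one_of_one_sub_eq_ofReal_mul ha₀ ha₁ hω₂ hω₄ (by linear_combination h₀))
        (hne₄ rfl)
    simp (disch := omega) only [if_neg, ↓reduceIte] at h₀
    exact .inr <| eq_two_of_norm_one_sub_ofReal_eq_one ha₀ <| by
      rw [show 1 - (a : ℂ) = ω₂ by linear_combination h₀, hω₂]
  · obtain rfl | hk₃ := eq_or_ne k₃ 0
    · simp (disch := omega) only [if_neg, ↓reduceIte] at h₀
      exact .inl <| eq_half_of_norm_one_sub_ofReal_eq_abs <| by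
        simpa [hω₃] using congrArg norm (by linear_combination h₀ : 1 - (a : ℂ) = -(a * ω₃))
    obtain rfl | hk₄ := eq_or_ne k₄ 0
    · simp (disch := omega) only [if_neg, ↓reduceIte] at h₀
      exact .inl <| eq_half_of_norm_one_sub_ofReal_eq_abs <| by
        simpa [hω₄] using congrArg norm (by linear_combination h₀ : 1 - (a : ℂ) = -(a * ω₄))
    simp (disch := omega) only [if_neg, ↓reduceIte] at h₀
    exact absurd (by exact_mod_cast (by linear_combination -h₀ : (a : ℂ) = 1)) ha₁
  · have hunit : |a| ≠ 1 := fun h => ((abs_eq zero_le_one).1 h).elim ha₁ ha₁'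
    obtain rfl | hk₃ := eq_or_ne k₃ k₁
    · simp (disch := omega) only [if_neg, ↓reduceIte] at h₁
      exact absurd (by simpa [hω₁, hω₃] using
        (congrArg norm (by linear_combination -h₁ : ω₁ = a * ω₃)).symm) hunit
    obtain rfl | hk₄ := eq_or_ne k₄ k₁
    · simp (disch := omega) only [if_neg, ↓reduceIte] at h₁
      exact absurd (by simpa [hω₁, hω₄] using
        (congrArg norm (by linear_combination -h₁ : ω₁ = a * ω₄)).symm) hunit
    simp (disch := omega) only [if_neg, ↓reduceIte] at h₁
    simpa [hω₁] using congrArg norm (by linear_combination -h₁ : ω₁ = 0)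

theorem eq_half_or_two_of_forall_coeff_relationPoly_ne_zero (hm : 5 ≤ m) (hk₁m : k₁ < m)
    (hk₂m : k₂ < m) (hk₃m : k₃ < m) (hk₄m : k₄ < m)
    (hω₁ : ‖ω₁‖ = 1) (hω₂ : ‖ω₂‖ = 1) (hω₃ : ‖ω₃‖ = 1) (hω₄ : ‖ω₄‖ = 1)
    (ha₀ : a ≠ 0) (ha₁ : a ≠ 1) (ha₁' : a ≠ -1)
    (hnz : ∀ j < m, (relationPoly a ω₁ ω₂ ω₃ ω₄ w k₁ k₂ k₃ k₄ s).coeff j ≠ 0)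
    (hnorm : ∀ i j, i < m → j < m → ‖(relationPoly a ω₁ ω₂ ω₃ ω₄ w k₁ k₂ k₃ k₄ s).coeff i‖ =
      ‖(relationPoly a ω₁ ω₂ ω₃ ω₄ w k₁ k₂ k₃ k₄ s).coeff j‖) :
    a = 1 / 2 ∨ a = 2 := by
  have hcover : ∀ j < m, j = 0 ∨ j = k₁ ∨ j = k₂ ∨ j = k₃ ∨ j = k₄ ∨ j = s := by
    intro j hj
    by_contra! hj'
    exact hnz j hj (by simp [coeff_relationPoly, hj'])
  have hfree := Nat.exists_ne_of_forall_lt hm hcover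
  have hunit : |a| ≠ 1 := fun h => ((abs_eq zero_le_one).1 h).elim ha₁ ha₁'
  by_cases h₁₂ : k₁ = k₂
  · subst h₁₂
    have h₀ : k₁ ≠ 0 ∧ k₃ ≠ 0 ∧ k₄ ≠ 0 ∧ s ≠ 0 := by
      obtain ⟨j, hj, hj'⟩ := hfree k₁ k₃ k₄ s
      omega
    have h₃ : k₃ ≠ k₁ ∧ k₃ ≠ k₄ ∧ k₃ ≠ s := by
      obtain ⟨j, hj, hj'⟩ := hfree 0 k₁ k₄ s
      omega
    have := hnorm 0 k₃ (by omega) hk₃m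
    simp (disch := omega) only [coeff_relationPoly, if_neg, ↓reduceIte] at this
    exact .inl <| eq_half_of_norm_one_sub_ofReal_eq_abs <| by simpa [hω₃] using this
  by_cases h₃₄ : k₃ = k₄
  · subst h₃₄
    have h₀ : k₁ ≠ 0 ∧ k₂ ≠ 0 ∧ k₃ ≠ 0 ∧ s ≠ 0 := by
      obtain ⟨j, hj, hj'⟩ := hfree k₁ k₂ k₃ s
      omega
    have h₁ : k₁ ≠ k₂ ∧ k₁ ≠ k₃ ∧ k₁ ≠ s := by
      obtain ⟨j, hj, hj'⟩ := hfree 0 k₂ k₃ s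
      omega
    have := hnorm 0 k₁ (by omega) hk₁m
    simp (disch := omega) only [coeff_relationPoly, if_neg, ↓reduceIte] at this
    exact .inr <| eq_two_of_norm_one_sub_ofReal_eq_one ha₀ <| by simpa [hω₁] using this
  obtain ⟨i, hi, hci⟩ : ∃ i < m, ‖(relationPoly a ω₁ ω₂ ω₃ ω₄ w k₁ k₂ k₃ k₄ s).coeff i‖ = 1 := by
    by_cases h : k₁ ≠ 0 ∧ k₁ ≠ k₃ ∧ k₁ ≠ k₄ ∧ k₁ ≠ s
    · exact ⟨k₁, hk₁m, by simp (disch := omega) [coeff_relationPoly, if_neg, hω₁]⟩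
    have h₂ : k₂ ≠ 0 ∧ k₂ ≠ k₃ ∧ k₂ ≠ k₄ ∧ k₂ ≠ s := by
      obtain ⟨j, hj, hj'⟩ := hfree 0 k₃ k₄ s
      omega
    exact ⟨k₂, hk₂m, by simp (disch := omega) [coeff_relationPoly, if_neg, hω₂]⟩
  obtain ⟨j, hj, hcj⟩ : ∃ j < m, ‖(relationPoly a ω₁ ω₂ ω₃ ω₄ w k₁ k₂ k₃ k₄ s).coeff j‖ = |a| := by
    by_cases h : k₃ ≠ 0 ∧ k₃ ≠ k₁ ∧ k₃ ≠ k₂ ∧ k₃ ≠ s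
    · exact ⟨k₃, hk₃m, by simp (disch := omega) [coeff_relationPoly, if_neg, hω₃]⟩
    have h₄ : k₄ ≠ 0 ∧ k₄ ≠ k₁ ∧ k₄ ≠ k₂ ∧ k₄ ≠ s := by
      obtain ⟨j, hj, hj'⟩ := hfree 0 k₁ k₂ s
      omega
    exact ⟨k₄, hk₄m, by simp (disch := omega) [coeff_relationPoly, if_neg, hω₄]⟩
  exact absurd (hcj.symm.trans ((hnorm j i hj hi).trans hci)) hunit

theorem eq_half_or_two_of_forall_norm_coeff_relationPoly_eq (hm : 5 ≤ m) (hk₁ : k₁ ≠ 0)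
    (h2k₁ : 2 * k₁ ≠ m) (hk₁m : k₁ < m) (hk₂m : k₂ < m) (hk₃m : k₃ < m) (hk₄m : k₄ < m)
    (hsm : s < m) (hs₁₂ : k₁ + k₂ = s ∨ k₁ + k₂ = s + m) (hs₃₄ : k₃ + k₄ = s ∨ k₃ + k₄ = s + m)
    (hω₁ : ‖ω₁‖ = 1) (hω₂ : ‖ω₂‖ = 1) (hω₃ : ‖ω₃‖ = 1) (hω₄ : ‖ω₄‖ = 1)
    (hne₃ : k₃ = 0 → ω₃ ≠ 1) (hne₄ : k₄ = 0 → ω₄ ≠ 1) (ha₀ : a ≠ 0) (ha₁ : a ≠ 1) (ha₁' : a ≠ -1)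
    (hnorm : ∀ i j, i < m → j < m → ‖(relationPoly a ω₁ ω₂ ω₃ ω₄ w k₁ k₂ k₃ k₄ s).coeff i‖ =
      ‖(relationPoly a ω₁ ω₂ ω₃ ω₄ w k₁ k₂ k₃ k₄ s).coeff j‖) :
    a = 1 / 2 ∨ a = 2 := by
  rcases eq_or_ne ((relationPoly a ω₁ ω₂ ω₃ ω₄ w k₁ k₂ k₃ k₄ s).coeff 0) 0 with h₀ | h₀
  · refine eq_half_or_two_of_forall_coeff_relationPoly_eq_zero (w := w) hk₁ h2k₁ hk₁m hk₂m hsm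
      hs₁₂ hs₃₄ hω₁ hω₂ hω₃ hω₄ hne₃ hne₄ ha₀ ha₁ ha₁' fun j hj => ?_
    simpa [h₀] using hnorm j 0 hj (by omega)
  · refine eq_half_or_two_of_forall_coeff_relationPoly_ne_zero hm hk₁m hk₂m hk₃m hk₄m
      hω₁ hω₂ hω₃ hω₄ ha₀ ha₁ ha₁' (fun j hj hj₀ => h₀ ?_) hnorm
    simpa [hj₀] using hnorm 0 j (by omega) hj

end relationPoly

theorem ratio_in_half_two_of_coprime (K : IntermediateField ℚ ℂ) {m : ℕ} (hm : 5 ≤ m) {ζ : ℂ}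
    (hζ : ‖ζ‖ = 1) (hζm : ζ ^ m ∈ K) (hdeg : Module.finrank K K⟮ζ⟯ = m - 1) {ω₁ ω₂ ω₃ ω₄ : ℂ}
    (hω₁K : ω₁ ∈ K) (hω₂K : ω₂ ∈ K) (hω₃K : ω₃ ∈ K) (hω₄K : ω₄ ∈ K)
    (hω₁ : ‖ω₁‖ = 1) (hω₂ : ‖ω₂‖ = 1) (hω₃ : ‖ω₃‖ = 1) (hω₄ : ‖ω₄‖ = 1)
    {k₁ k₂ k₃ k₄ : ℕ} (hk₁ : k₁ < m) (hk₂ : k₂ < m) (hk₃ : k₃ < m) (hk₄ : k₄ < m)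
    (hcop : k₁.Coprime m) (hmod : (k₁ + k₂) % m = (k₃ + k₄) % m)
    (hne₃ : ω₃ * ζ ^ k₃ ≠ 1) (hne₄ : ω₄ * ζ ^ k₄ ≠ 1)
    {a : ℝ} (ha₀ : a ≠ 0) (ha₁ : a ≠ 1) (ha₁' : a ≠ -1) (haK : (a : ℂ) ∈ K)
    (hrel : a * ((1 - ω₃ * ζ ^ k₃) * (1 - ω₄ * ζ ^ k₄)) =
      (1 - ω₁ * ζ ^ k₁) * (1 - ω₂ * ζ ^ k₂)) :
    a = 1 / 2 ∨ a = 2 := by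
  have hk₁₀ : k₁ ≠ 0 := by
    rintro rfl
    rw [Nat.coprime_zero_left] at hcop
    omega
  have h2k₁ : 2 * k₁ ≠ m := by
    rintro rfl
    have := hcop.eq_one_of_dvd (dvd_mul_left k₁ 2)
    omega
  obtain ⟨s, hs⟩ : ∃ s, (k₁ + k₂) % m = s := ⟨_, rfl⟩
  have hsm : s < m := hs ▸ Nat.mod_lt _ (by omega)
  set w := ω₁ * ω₂ * (ζ ^ m) ^ ((k₁ + k₂) / m) - a * ω₃ * ω₄ * (ζ ^ m) ^ ((k₃ + k₄) / m)
  have hw : w ∈ K := sub_mem (mul_mem (mul_mem hω₁K hω₂K) (pow_mem hζm _))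
    (mul_mem (mul_mem (mul_mem haK hω₃K) hω₄K) (pow_mem hζm _))
  have hpow : ∀ k, ζ ^ k = (ζ ^ m) ^ (k / m) * ζ ^ (k % m) := fun k => by
    rw [← pow_mul, ← pow_add, Nat.div_add_mod]
  have hQζ : (relationPoly a ω₁ ω₂ ω₃ ω₄ w k₁ k₂ k₃ k₄ s).eval ζ = 0 := by
    have h₁₂ := hpow (k₁ + k₂)
    have h₃₄ := hpow (k₃ + k₄)
    rw [pow_add, hs] at h₁₂
    rw [pow_add, ← hmod, hs] at h₃₄
    simp only [relationPoly, eval_add, eval_sub, eval_mul, eval_C, eval_pow, eval_X]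
    linear_combination -hrel - ω₁ * ω₂ * h₁₂ + a * ω₃ * ω₄ * h₃₄
  have hnorm := fun i j (hi : i < m) (hj : j < m) =>
    norm_coeff_eq_of_eval_eq_zero hζ (by omega) ⟨⟨_, hζm⟩, rfl⟩ hdeg
      (relationPoly_mem_lifts K haK hω₁K hω₂K hω₃K hω₄K hw)
      (degree_relationPoly_lt hk₁ hk₂ hk₃ hk₄ hsm) hQζ hi hj
  exact eq_half_or_two_of_forall_norm_coeff_relationPoly_eq hm hk₁₀ h2k₁ hk₁ hk₂ hk₃ hk₄ hsm
    (hs ▸ Nat.add_eq_mod_or_eq_mod_add hk₁ hk₂) (hs ▸ hmod ▸ Nat.add_eq_mod_or_eq_mod_add hk₃ hk₄)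
    hω₁ hω₂ hω₃ hω₄ (fun h => by simpa [h] using hne₃) (fun h => by simpa [h] using hne₄)
    ha₀ ha₁ ha₁' hnorm

theorem ratio_in_half_two_of_coprime_numerator (K : IntermediateField ℚ ℂ) {m : ℕ} (hm : 5 ≤ m)
    {ζ : ℂ} (hζ : ‖ζ‖ = 1) (hζm : ζ ^ m ∈ K) (hdeg : Module.finrank K K⟮ζ⟯ = m - 1)
    {ω₁ ω₂ ω₃ ω₄ : ℂ} (hω₁K : ω₁ ∈ K) (hω₂K : ω₂ ∈ K) (hω₃K : ω₃ ∈ K) (hω₄K : ω₄ ∈ K)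
    (hω₁ : ‖ω₁‖ = 1) (hω₂ : ‖ω₂‖ = 1) (hω₃ : ‖ω₃‖ = 1) (hω₄ : ‖ω₄‖ = 1)
    {k₁ k₂ k₃ k₄ : ℕ} (hk₁ : k₁ < m) (hk₂ : k₂ < m) (hk₃ : k₃ < m) (hk₄ : k₄ < m)
    (hcop : k₁.Coprime m ∨ k₂.Coprime m) (hmod : (k₁ + k₂) % m = (k₃ + k₄) % m)
    (hne₃ : ω₃ * ζ ^ k₃ ≠ 1) (hne₄ : ω₄ * ζ ^ k₄ ≠ 1)
    {a : ℝ} (ha₀ : a ≠ 0) (ha₁ : a ≠ 1) (ha₁' : a ≠ -1) (haK : (a : ℂ) ∈ K)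
    (hrel : a * ((1 - ω₃ * ζ ^ k₃) * (1 - ω₄ * ζ ^ k₄)) =
      (1 - ω₁ * ζ ^ k₁) * (1 - ω₂ * ζ ^ k₂)) :
    a = 1 / 2 ∨ a = 2 := by
  rcases hcop with hcop | hcop
  · exact ratio_in_half_two_of_coprime K hm hζ hζm hdeg hω₁K hω₂K hω₃K hω₄K hω₁ hω₂ hω₃ hω₄
      hk₁ hk₂ hk₃ hk₄ hcop hmod hne₃ hne₄ ha₀ ha₁ ha₁' haK hrel
  · exact ratio_in_half_two_of_coprime K hm hζ hζm hdeg hω₂K hω₁K hω₃K hω₄K hω₂ hω₁ hω₃ hω₄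
      hk₂ hk₁ hk₃ hk₄ hcop (by rwa [add_comm]) hne₃ hne₄ ha₀ ha₁ ha₁' haK (by rw [hrel]; ring)

theorem ratio_in_half_two (K : IntermediateField ℚ ℂ) {m : ℕ} (hm : 5 ≤ m)
    {ζ : ℂ} (hζ : ‖ζ‖ = 1) (hζm : ζ ^ m ∈ K) (hdeg : Module.finrank K K⟮ζ⟯ = m - 1)
    {ω₁ ω₂ ω₃ ω₄ : ℂ} (hω₁K : ω₁ ∈ K) (hω₂K : ω₂ ∈ K) (hω₃K : ω₃ ∈ K) (hω₄K : ω₄ ∈ K)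
    (hω₁ : ‖ω₁‖ = 1) (hω₂ : ‖ω₂‖ = 1) (hω₃ : ‖ω₃‖ = 1) (hω₄ : ‖ω₄‖ = 1)
    {k₁ k₂ k₃ k₄ : ℕ} (hk₁ : k₁ < m) (hk₂ : k₂ < m) (hk₃ : k₃ < m) (hk₄ : k₄ < m)
    (hcop : (k₁.Coprime m ∨ k₂.Coprime m) ∨ (k₃.Coprime m ∨ k₄.Coprime m))
    (hmod : (k₁ + k₂) % m = (k₃ + k₄) % m) (hne₃ : ω₃ * ζ ^ k₃ ≠ 1) (hne₄ : ω₄ * ζ ^ k₄ ≠ 1)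
    {a : ℝ} (ha₀ : a ≠ 0) (ha₁ : a ≠ 1) (ha₁' : a ≠ -1) (haK : (a : ℂ) ∈ K)
    (hrel : a * ((1 - ω₃ * ζ ^ k₃) * (1 - ω₄ * ζ ^ k₄)) =
      (1 - ω₁ * ζ ^ k₁) * (1 - ω₂ * ζ ^ k₂)) :
    a = 1 / 2 ∨ a = 2 := by
  rcases hcop with hcop | hcop
  · exact ratio_in_half_two_of_coprime_numerator K hm hζ hζm hdeg hω₁K hω₂K hω₃K hω₄K
      hω₁ hω₂ hω₃ hω₄ hk₁ hk₂ hk₃ hk₄ hcop hmod hne₃ hne₄ ha₀ ha₁ ha₁' haK hrel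
  -- exchanging numerator and denominator replaces `a` by `a⁻¹`, and `{1/2, 2}` is closed under `⁻¹`
  have ha₀C : (a : ℂ) ≠ 0 := Complex.ofReal_ne_zero.2 ha₀
  have hnum : (1 - ω₁ * ζ ^ k₁) * (1 - ω₂ * ζ ^ k₂) ≠ 0 :=
    hrel ▸ mul_ne_zero ha₀C (mul_ne_zero (sub_ne_zero.2 hne₃.symm) (sub_ne_zero.2 hne₄.symm))
  have hinv := ratio_in_half_two_of_coprime_numerator K hm hζ hζm hdeg hω₃K hω₄K hω₁K hω₂K
    hω₃ hω₄ hω₁ hω₂ hk₃ hk₄ hk₁ hk₂ hcop hmod.symm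
    (fun h => hnum (by rw [h, sub_self, zero_mul])) (fun h => hnum (by rw [h, sub_self, mul_zero]))
    (inv_ne_zero ha₀) (inv_ne_one.2 ha₁) (by rwa [Ne, inv_eq_iff_eq_inv, inv_neg, inv_one])
    (by rw [Complex.ofReal_inv]; exact inv_mem haK)
    (by rw [← hrel, Complex.ofReal_inv, inv_mul_cancel_left₀ ha₀C])
  rcases hinv with h | h <;> [right; left] <;> rw [← inv_inv a, h] <;> norm_num

/-- Lemma on quotients of products (1−ωζ^k), case (b): [K(ζ):K] = m−1 with m ≥ 5. -/
theorem ratio_in_half_two_degree_sub_one (K : IntermediateField ℚ ℂ) (m : ℕ) (hm : 5 ≤ m)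
    (ζ : ℂ) (hζ : ∃ n : ℕ, 0 < n ∧ ζ ^ n = 1) (hζm : ζ ^ m ∈ K)
    (hdeg : Module.finrank K (IntermediateField.adjoin K {ζ}) = m - 1)
    (ω1 ω2 ω3 ω4 : ℂ)
    (hω1 : ω1 ∈ K ∧ ∃ n : ℕ, 0 < n ∧ ω1 ^ n = 1)
    (hω2 : ω2 ∈ K ∧ ∃ n : ℕ, 0 < n ∧ ω2 ^ n = 1)
    (hω3 : ω3 ∈ K ∧ ∃ n : ℕ, 0 < n ∧ ω3 ^ n = 1)
    (hω4 : ω4 ∈ K ∧ ∃ n : ℕ, 0 < n ∧ ω4 ^ n = 1)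
    (k1 k2 k3 k4 : ℕ) (hk1 : k1 ≤ m - 1) (hk2 : k2 ≤ m - 1) (hk3 : k3 ≤ m - 1)
    (hk4 : k4 ≤ m - 1)
    (hgcd : Nat.gcd k1 m = 1 ∨ Nat.gcd k2 m = 1 ∨ Nat.gcd k3 m = 1 ∨ Nat.gcd k4 m = 1)
    (hmod : (k1 + k2) % m = (k3 + k4) % m)
    (hne3 : ω3 * ζ ^ k3 ≠ 1) (hne4 : ω4 * ζ ^ k4 ≠ 1)
    (a : ℝ) (ha0 : a ≠ 0) (ha1 : a ≠ 1) (ham1 : a ≠ -1) (haK : (a : ℂ) ∈ K)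
    (haeq : (a : ℂ) = ((1 - ω1 * ζ ^ k1) * (1 - ω2 * ζ ^ k2))
        / ((1 - ω3 * ζ ^ k3) * (1 - ω4 * ζ ^ k4))) :
    a = 1 / 2 ∨ a = 2 := by
  have hunit : ∀ ω : ℂ, (∃ n : ℕ, 0 < n ∧ ω ^ n = 1) → ‖ω‖ = 1 := fun ω ⟨n, hn, h⟩ =>
    Complex.norm_eq_one_of_pow_eq_one h hn.ne'
  have hden : (1 - ω3 * ζ ^ k3) * (1 - ω4 * ζ ^ k4) ≠ 0 :=
    mul_ne_zero (sub_ne_zero.2 hne3.symm) (sub_ne_zero.2 hne4.symm)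
  exact ratio_in_half_two K hm (hunit ζ hζ) hζm hdeg hω1.1 hω2.1 hω3.1 hω4.1
    (hunit ω1 hω1.2) (hunit ω2 hω2.2) (hunit ω3 hω3.2) (hunit ω4 hω4.2)
    (by omega) (by omega) (by omega) (by omega) (or_assoc.2 hgcd) hmod hne3 hne4 ha0 ha1 ham1 haK
    (by rw [haeq, div_mul_cancel₀ _ hden])
end

section
/- Let Λ ⊆ ℂ and set K_Λ = ℚ((Λ−Λ) ∪ (conjugate of Λ−Λ)), the field generated over ℚ by all differences of elements of Λ and their complex conjugates. Then the cross ratio of the slopes of any four pairwise nonparallel Λ-directions lies in K_Λ ∩ ℝ. -/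
/-- det(z,w) = Re z · Im w − Im z · Re w; it vanishes iff z and w are parallel. -/
def detC (z w : ℂ) : ℝ := z.re * w.im - z.im * w.re

/-- The cross ratio ⟨sl z₁, sl z₂, sl z₃, sl z₄⟩ of the slopes sl z = Im z / Re z
(with value ∞ when Re z = 0, and the usual conventions for ∞), expressed via the
determinant formula, which is valid in all cases including infinite slopes. -/
noncomputable def crossRatioSlopes (z1 z2 z3 z4 : ℂ) : ℝ :=
  (detC z1 z3 * detC z2 z4) / (detC z2 z3 * detC z1 z4)

/-- u is a Λ-direction: a unit vector parallel to a nonzero difference of points of Λ. -/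
def IsDirectionOf (Λ : Set ℂ) (u : ℂ) : Prop :=
  ‖u‖ = 1 ∧ ∃ v ∈ Λ, ∃ w ∈ Λ, v ≠ w ∧ ∃ r : ℝ, u = r * (v - w)

/-!
Rescaling the four directions by nonzero reals does not change the cross ratio, so we may
replace each Λ-direction by a difference `d ∈ Λ - Λ`. Since `2i · det(z, w) = z̄ w - z w̄`, the
cross ratio of the differences is `E₁₃ E₂₄ / (E₂₃ E₁₄)` with `Eᵢⱼ = d̄ᵢ dⱼ - dᵢ d̄ⱼ`
(the factors `2i` cancel), a rational expression in the `dᵢ` and their conjugates.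
-/

open ComplexConjugate

lemma detC_ofReal_mul_ofReal (r s : ℝ) (z w : ℂ) :
    detC (r * z) (s * w) = r * s * detC z w := by
  simp only [detC, Complex.re_ofReal_mul, Complex.im_ofReal_mul]
  ring

lemma ofReal_detC_mul_two_I (z w : ℂ) :
    (detC z w : ℂ) * (2 * Complex.I) = conj z * w - z * conj w := by
  apply Complex.ext
  · simp [detC, Complex.mul_re, Complex.mul_im]
  · simp [detC, Complex.mul_re, Complex.mul_im]
    ring

lemma crossRatioSlopes_ofReal_mul {r1 r2 r3 r4 : ℝ} (hr1 : r1 ≠ 0) (hr2 : r2 ≠ 0)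
    (hr3 : r3 ≠ 0) (hr4 : r4 ≠ 0) (z1 z2 z3 z4 : ℂ) :
    crossRatioSlopes (r1 * z1) (r2 * z2) (r3 * z3) (r4 * z4) =
      crossRatioSlopes z1 z2 z3 z4 := by
  simp only [crossRatioSlopes, detC_ofReal_mul_ofReal]
  calc r1 * r3 * detC z1 z3 * (r2 * r4 * detC z2 z4) /
        (r2 * r3 * detC z2 z3 * (r1 * r4 * detC z1 z4))
      = (r1 * r2 * r3 * r4) * (detC z1 z3 * detC z2 z4) /
        ((r1 * r2 * r3 * r4) * (detC z2 z3 * detC z1 z4)) := by ring_nf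
    _ = _ := mul_div_mul_left _ _ (by positivity)

lemma ofReal_crossRatioSlopes (z1 z2 z3 z4 : ℂ) :
    (crossRatioSlopes z1 z2 z3 z4 : ℂ) =
      (conj z1 * z3 - z1 * conj z3) * (conj z2 * z4 - z2 * conj z4) /
        ((conj z2 * z3 - z2 * conj z3) * (conj z1 * z4 - z1 * conj z4)) := by
  simp only [← ofReal_detC_mul_two_I, crossRatioSlopes, Complex.ofReal_div,
    Complex.ofReal_mul]
  calc _ = (2 * Complex.I) * (2 * Complex.I) * ((detC z1 z3 : ℂ) * detC z2 z4) /
        ((2 * Complex.I) * (2 * Complex.I) * ((detC z2 z3 : ℂ) * detC z1 z4)) :=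
        (mul_div_mul_left _ _ (by simp)).symm
    _ = _ := by ring_nf

lemma ofReal_crossRatioSlopes_mem {K : Subfield ℂ} {z1 z2 z3 z4 : ℂ}
    (h1 : z1 ∈ K ∧ conj z1 ∈ K) (h2 : z2 ∈ K ∧ conj z2 ∈ K)
    (h3 : z3 ∈ K ∧ conj z3 ∈ K) (h4 : z4 ∈ K ∧ conj z4 ∈ K) :
    (crossRatioSlopes z1 z2 z3 z4 : ℂ) ∈ K := by
  have hE : ∀ {z w : ℂ}, z ∈ K ∧ conj z ∈ K → w ∈ K ∧ conj w ∈ K →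
      conj z * w - z * conj w ∈ K := fun hz hw =>
    K.sub_mem (K.mul_mem hz.2 hw.1) (K.mul_mem hz.1 hw.2)
  rw [ofReal_crossRatioSlopes]
  exact K.div_mem (K.mul_mem (hE h1 h3) (hE h2 h4)) (K.mul_mem (hE h2 h3) (hE h1 h4))

lemma IsDirectionOf.exists_ofReal_mul_sub {Λ : Set ℂ} {u : ℂ} (hu : IsDirectionOf Λ u) :
    ∃ r : ℝ, r ≠ 0 ∧ ∃ v ∈ Λ, ∃ w ∈ Λ, u = r * (v - w) := by
  obtain ⟨hnorm, v, hv, w, hw, -, r, rfl⟩ := hu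
  refine ⟨r, ?_, v, hv, w, hw, rfl⟩
  rintro rfl
  simp at hnorm

theorem crossRatio_mem_KLambda_general (Λ : Set ℂ) (u1 u2 u3 u4 : ℂ)
    (hd1 : IsDirectionOf Λ u1) (hd2 : IsDirectionOf Λ u2)
    (hd3 : IsDirectionOf Λ u3) (hd4 : IsDirectionOf Λ u4) :
    ((crossRatioSlopes u1 u2 u3 u4 : ℝ) : ℂ) ∈
      Subfield.closure ({z : ℂ | ∃ v ∈ Λ, ∃ w ∈ Λ, z = v - w}
        ∪ {z : ℂ | ∃ v ∈ Λ, ∃ w ∈ Λ, z = (starRingEnd ℂ) (v - w)}) := by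
  set K := Subfield.closure ({z : ℂ | ∃ v ∈ Λ, ∃ w ∈ Λ, z = v - w}
    ∪ {z : ℂ | ∃ v ∈ Λ, ∃ w ∈ Λ, z = (starRingEnd ℂ) (v - w)})
  have hK : ∀ v ∈ Λ, ∀ w ∈ Λ, v - w ∈ K ∧ conj (v - w) ∈ K := fun v hv w hw =>
    ⟨Subfield.subset_closure (.inl ⟨v, hv, w, hw, rfl⟩),
      Subfield.subset_closure (.inr ⟨v, hv, w, hw, rfl⟩)⟩
  obtain ⟨r1, hr1, v1, hv1, w1, hw1, rfl⟩ := hd1.exists_ofReal_mul_sub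
  obtain ⟨r2, hr2, v2, hv2, w2, hw2, rfl⟩ := hd2.exists_ofReal_mul_sub
  obtain ⟨r3, hr3, v3, hv3, w3, hw3, rfl⟩ := hd3.exists_ofReal_mul_sub
  obtain ⟨r4, hr4, v4, hv4, w4, hw4, rfl⟩ := hd4.exists_ofReal_mul_sub
  rw [crossRatioSlopes_ofReal_mul hr1 hr2 hr3 hr4]
  exact ofReal_crossRatioSlopes_mem (hK v1 hv1 w1 hw1) (hK v2 hv2 w2 hw2)
    (hK v3 hv3 w3 hw3) (hK v4 hv4 w4 hw4)

/-- The cross ratio of slopes of four pairwise nonparallel Λ-directions lies in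
K_Λ = ℚ((Λ−Λ) ∪ conj(Λ−Λ)); being real, it lies in K_Λ ∩ ℝ. -/
theorem crossRatio_mem_KLambda (Λ : Set ℂ) (u1 u2 u3 u4 : ℂ)
    (hd1 : IsDirectionOf Λ u1) (hd2 : IsDirectionOf Λ u2)
    (hd3 : IsDirectionOf Λ u3) (hd4 : IsDirectionOf Λ u4)
    (h12 : detC u1 u2 ≠ 0) (h13 : detC u1 u3 ≠ 0) (h14 : detC u1 u4 ≠ 0)
    (h23 : detC u2 u3 ≠ 0) (h24 : detC u2 u4 ≠ 0) (h34 : detC u3 u4 ≠ 0) :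
    ((crossRatioSlopes u1 u2 u3 u4 : ℝ) : ℂ) ∈
      Subfield.closure ({z : ℂ | ∃ v ∈ Λ, ∃ w ∈ Λ, z = v - w}
        ∪ {z : ℂ | ∃ v ∈ Λ, ∃ w ∈ Λ, z = (starRingEnd ℂ) (v - w)}) :=
  crossRatio_mem_KLambda_general Λ u1 u2 u3 u4 hd1 hd2 hd3 hd4
end

section
/- Every real algebraic number field L (a finite extension of ℚ inside ℝ) contains a Pisot–Vijayaraghavan number that generates L over ℚ; i.e., there is an algebraic integer λ ∈ L with L = ℚ(λ), λ > 1, and all Galois conjugates of λ other than λ itself have absolute value strictly less than 1. -/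
/-!
Minkowski's convex body theorem gives a nonzero algebraic integer `a ∈ L` with `w a < 1/2` at
every infinite place `w` other than the place `w₀` of the inclusion `L ⊆ ℝ`. Since
`|N(a)| = ∏ w a ^ mult w ≥ 1`, this forces `w₀ a ≥ 1`, so `λ = ±2a` satisfies `λ > 1` and
`w λ < 1` for `w ≠ w₀`. An element that is large at a single real place generates `L`, and the
absolute values of its other conjugates `σ λ` are exactly the values `w λ` at the places `w ≠ w₀`.
-/

open NumberField InfinitePlace mixedEmbedding Polynomial
open scoped IntermediateField

theorem IntermediateField.adjoin_simple_neg (F : Type*) {E : Type*} [Field F] [Field E]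
    [Algebra F E] (x : E) : F⟮-x⟯ = F⟮x⟯ := by
  refine le_antisymm ?_ ?_ <;> rw [IntermediateField.adjoin_simple_le_iff]
  · exact neg_mem (IntermediateField.mem_adjoin_simple_self F x)
  · simpa using neg_mem (IntermediateField.mem_adjoin_simple_self F (-x))

namespace NumberField

section RealEmbedding

variable {K : Type*} [Field K]

theorem ComplexEmbedding.isReal_ofReal_comp (φ : K →+* ℝ) :
    ComplexEmbedding.IsReal (Complex.ofRealHom.comp φ) :=
  ComplexEmbedding.isReal_iff.mpr <| RingHom.ext fun x ↦ Complex.conj_ofReal (φ x)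

theorem InfinitePlace.mk_ofReal_comp_apply (φ : K →+* ℝ) (x : K) :
    InfinitePlace.mk (Complex.ofRealHom.comp φ) x = |φ x| := by
  rw [InfinitePlace.apply, RingHom.comp_apply, Complex.ofRealHom_eq_coe, Complex.norm_real,
    Real.norm_eq_abs]

end RealEmbedding

variable {K : Type*} [Field K] [NumberField K]

theorem exists_pisot_primitive_element_of_isReal {w₀ : InfinitePlace K} (hw₀ : IsReal w₀) :
    ∃ x : 𝓞 K, ℚ⟮(x : K)⟯ = ⊤ ∧ 1 < w₀ x ∧ ∀ w ≠ w₀, w x < 1 := by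
  obtain ⟨B, hB⟩ : ∃ B : ℕ, minkowskiBound K 1 < B * convexBodyLTFactor K :=
    ENNReal.exists_nat_mul_gt (ENNReal.coe_ne_zero.mpr (convexBodyLTFactor_ne_zero K))
      (minkowskiBound_lt_top K 1).ne
  obtain ⟨g, hg, hg_prod⟩ := adjust_f K (w₁ := w₀) (f := fun _ ↦ 2⁻¹) B (fun _ _ ↦ by norm_num)
  obtain ⟨a, ha, ha_lt⟩ := exists_ne_zero_mem_ringOfIntegers_lt K (f := g)
    (by rwa [convexBodyLT_volume, hg_prod, mul_comm])
  have ha_half (w : InfinitePlace K) (hw : w ≠ w₀) : w a < 2⁻¹ := by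
    simpa [hg w hw] using ha_lt w
  -- `w₀ a ≥ 1` may be an equality (e.g. for `K = ℚ`); doubling makes it strict.
  have h2a (w : InfinitePlace K) : w ((2 * a : 𝓞 K) : K) = 2 * w a := by
    rw [RingOfIntegers.coe_eq_algebraMap, map_mul, map_mul, map_ofNat, ← Nat.cast_ofNat,
      InfinitePlace.map_natCast, Nat.cast_ofNat]
  have hlt (w : InfinitePlace K) (hw : w ≠ w₀) : w ((2 * a : 𝓞 K) : K) < 1 := by
    rw [h2a]
    linarith [ha_half w hw]
  refine ⟨2 * a, ?_, ?_, hlt⟩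
  · exact is_primitive_element_of_infinitePlace_lt (mul_ne_zero two_ne_zero ha)
      (fun w hw ↦ hlt w hw) (Or.inl hw₀)
  · have ha_one := one_le_of_lt_one ha fun w hw ↦ (ha_half w hw).trans (by norm_num)
    rw [h2a]
    linarith

theorem exists_pisot_primitive_element_of_realEmbedding (φ : K →+* ℝ) :
    ∃ x : 𝓞 K, ℚ⟮(x : K)⟯ = ⊤ ∧ 1 < φ x ∧
      ∀ w ≠ InfinitePlace.mk (Complex.ofRealHom.comp φ), w x < 1 := by
  obtain ⟨x, hgen, hgt, hlt⟩ := exists_pisot_primitive_element_of_isReal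
    (isReal_mk_iff.mpr (ComplexEmbedding.isReal_ofReal_comp φ))
  rw [InfinitePlace.mk_ofReal_comp_apply] at hgt
  rcases abs_choice (φ x) with habs | habs
  · exact ⟨x, hgen, habs ▸ hgt, hlt⟩
  · have hneg : ((-x : 𝓞 K) : K) = -x := map_neg (algebraMap (𝓞 K) K) x
    refine ⟨-x, ?_, ?_, fun w hw ↦ ?_⟩
    · rwa [hneg, IntermediateField.adjoin_simple_neg]
    · rwa [hneg, map_neg, ← habs]
    · rw [hneg]
      exact (w.1.map_neg _).trans_lt (hlt w hw)

theorem norm_lt_one_of_aeval_minpoly_eq_zero (φ : K →+* ℝ) {x : K}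
    (hx : ∀ w ≠ InfinitePlace.mk (Complex.ofRealHom.comp φ), w x < 1) {z : ℂ}
    (hz : aeval z (minpoly ℚ x) = 0) (hne : z ≠ φ x) : ‖z‖ < 1 := by
  obtain ⟨σ, rfl⟩ : ∃ σ : K →+* ℂ, σ x = z := by
    rw [← Set.mem_range, Embeddings.range_eval_eq_rootSet_minpoly]
    exact mem_rootSet.mpr ⟨minpoly.ne_zero (Algebra.IsIntegral.isIntegral x), hz⟩
  refine hx (InfinitePlace.mk σ) fun h ↦ hne ?_
  obtain rfl | hconj := mk_eq_iff.mp h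
  · rfl
  · rw [← ComplexEmbedding.isReal_iff.mp (ComplexEmbedding.isReal_ofReal_comp φ)] at hconj
    rw [(ComplexEmbedding.involutive_conjugate K).injective hconj]
    rfl

end NumberField

/-- Every real algebraic number field L contains a Pisot–Vijayaraghavan number that is a
primitive element: an algebraic integer λ ∈ L with λ > 1, ℚ(λ) = L, and all conjugates of
λ (complex roots of its minimal polynomial) other than λ itself of modulus < 1. -/
theorem exists_pisot_primitive_element (L : IntermediateField ℚ ℝ)
    [FiniteDimensional ℚ L] :
    ∃ lam : ℝ, lam ∈ L ∧ IsIntegral ℤ lam ∧ 1 < lam ∧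
      IntermediateField.adjoin ℚ {lam} = L ∧
      ∀ z : ℂ, Polynomial.aeval z (minpoly ℚ lam) = 0 → z ≠ (lam : ℂ) →
        ‖z‖ < 1 := by
  have : NumberField L := ⟨⟩
  obtain ⟨x, hgen, hgt, hlt⟩ :=
    exists_pisot_primitive_element_of_realEmbedding (algebraMap L ℝ)
  refine ⟨(x : L), (x : L).2, (RingOfIntegers.isIntegral_coe x).algebraMap, hgt, ?_, ?_⟩
  · rw [← IntermediateField.lift_adjoin_simple]
    exact (congrArg IntermediateField.lift hgen).trans (IntermediateField.lift_top (F := ℚ) L)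
  · have hmin : minpoly ℚ ((x : L) : ℝ) = minpoly ℚ (x : L) :=
      minpoly.algHom_eq L.val Subtype.val_injective _
    rw [hmin]
    exact fun z hz hne ↦ norm_lt_one_of_aeval_minpoly_eq_zero _ hlt hz hne
end

section
/- Let K ⊆ ℂ be a number field with K = K̄ (closed under complex conjugation), K ⊄ ℝ, [K:ℚ] = d ≥ 4, with exactly s pairs of complex embeddings and t real embeddings (d = 2s + t), and let ★ : 𝒪_K → ℂ^{s−1} × ℝ^t be the map z ↦ (σ₂(z),…,σ_{s}(z),σ_{s+1}(z),…,σ_{s+t}(z)) collecting all embeddings of K into ℂ except the identity and complex conjugation (one from each conjugate pair). Then the image 𝒪_K^★ is dense in ℂ^{s−1} × ℝ^t ≅ ℝ^{d−2}. -/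
/-!
Dirichlet's unit theorem gives a unit `θ` of `𝓞 K` with `|σ θ| < 1` for every embedding `σ`
other than the identity and complex conjugation. By Dedekind's independence of characters the
real span of the image of `𝓞 K` is all of `ℂ^{s-1} × ℝ^t`; this needs the `σ i` with
`i < s - 1` to be non-real, which follows by counting the `2 * s + t` embeddings. Write a point
as a real combination of `θ^n` times a fixed spanning family `b_j ⊆ 𝓞 K` and round the
coefficients down: this gives an element of the image within `∑ j, ‖(θ^n b_j)^★‖ → 0`.
-/

open ComplexConjugate Filter Topology NumberField NumberField.ComplexEmbedding

theorem mem_closure_of_mem_span_of_tendsto_zero {E ι : Type*} [NormedAddCommGroup E]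
    [NormedSpace ℝ E] [Fintype ι] (G : AddSubgroup E) (v : ℕ → ι → E)
    (hvG : ∀ n j, v n j ∈ G) (hv : ∀ j, Tendsto (fun n => v n j) atTop (𝓝 0)) {x : E}
    (hx : ∀ n, x ∈ Submodule.span ℝ (Set.range (v n))) : x ∈ closure (G : Set E) := by
  choose a ha using fun n => (Submodule.mem_span_range_iff_exists_fun ℝ).1 (hx n)
  -- rounding the coefficients down lands in `G`, at distance at most `∑ j, ‖v n j‖` from `x`
  refine mem_closure_of_tendsto (b := atTop) (f := fun n => ∑ j, ⌊a n j⌋ • v n j) ?_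
    (Eventually.of_forall fun n => G.sum_mem fun j _ => G.zsmul_mem (hvG n j) _)
  have hbound : ∀ n, ‖∑ j, ⌊a n j⌋ • v n j - x‖ ≤ ∑ j, ‖v n j‖ := fun n =>
    calc ‖∑ j, ⌊a n j⌋ • v n j - x‖ = ‖∑ j, Int.fract (a n j) • v n j‖ := by
          rw [norm_sub_rev, ← ha n, ← Finset.sum_sub_distrib]
          simp only [← Int.cast_smul_eq_zsmul ℝ, ← sub_smul, Int.self_sub_floor]
      _ ≤ ∑ j, ‖Int.fract (a n j) • v n j‖ := norm_sum_le _ _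
      _ ≤ ∑ j, ‖v n j‖ := Finset.sum_le_sum fun j _ => by
          rw [norm_smul, Real.norm_of_nonneg (Int.fract_nonneg _)]
          exact mul_le_of_le_one_left (norm_nonneg _) (Int.fract_lt_one _).le
  have hlim : Tendsto (fun n => ∑ j, ‖v n j‖) atTop (𝓝 0) := by
    simpa using tendsto_finsetSum Finset.univ fun j _ => (hv j).norm
  exact tendsto_iff_norm_sub_tendsto_zero.2 (squeeze_zero (fun n => norm_nonneg _) hbound hlim)

theorem subset_closure_of_contracting {E : Type*} [NormedAddCommGroup E] [NormedSpace ℝ E]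
    [FiniteDimensional ℝ E] (G : AddSubgroup E) (L : E →ₗ[ℝ] E) (hLG : ∀ g ∈ G, L g ∈ G)
    (hL : ∀ v, Tendsto (fun n => (L ^ n) v) atTop (𝓝 0)) {V : Set E}
    (hVG : V ⊆ Submodule.span ℝ (G : Set E)) (hVL : V ⊆ L '' V) :
    V ⊆ closure (G : Set E) := by
  obtain ⟨b, hbG, hbspan, hbli⟩ := exists_linearIndependent ℝ (G : Set E)
  have : Fintype b := have := hbli.finite; Fintype.ofFinite b
  have hpowG (n : ℕ) : ∀ g ∈ G, (L ^ n) g ∈ G := by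
    induction n with
    | zero => simp
    | succ n ih => intro g hg; rw [pow_succ', Module.End.mul_apply]; exact hLG _ (ih g hg)
  have hpowV (n : ℕ) : V ⊆ ⇑(L ^ n) '' V := by
    induction n with
    | zero => simp
    | succ n ih =>
      intro x hx
      obtain ⟨y, hy, rfl⟩ := hVL hx
      obtain ⟨w, hw, rfl⟩ := ih hy
      exact ⟨w, hw, by rw [pow_succ', Module.End.mul_apply]⟩
  intro x hx
  refine mem_closure_of_mem_span_of_tendsto_zero G (fun n (j : b) => (L ^ n) j)
    (fun n j => hpowG n j (hbG j.2)) (fun j => hL j) fun n => ?_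
  obtain ⟨y, hy, rfl⟩ := hpowV n hx
  rw [Set.range_comp' (⇑(L ^ n)), ← Submodule.map_span, Subtype.range_coe, hbspan]
  exact Submodule.mem_map_of_mem (hVG hy)

theorem LinearMap.apply_eq_re_sum_mul {ι : Type*} [Fintype ι] [DecidableEq ι]
    (f : (ι → ℂ) →ₗ[ℝ] ℝ) (v : ι → ℂ) :
    f v = (∑ i, (f (Pi.single i 1) - f (Pi.single i Complex.I) * Complex.I) * v i).re := by
  conv_lhs => rw [← Finset.univ_sum_single v]
  rw [map_sum, Complex.re_sum]
  refine Finset.sum_congr rfl fun i _ => ?_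
  have hsingle : Pi.single i (v i) = (v i).re • Pi.single (M := fun _ => ℂ) i 1 +
      (v i).im • Pi.single (M := fun _ => ℂ) i Complex.I := by
    rw [← Pi.single_smul', ← Pi.single_smul', ← Pi.single_add]
    simp [Complex.real_smul, Complex.re_add_im]
  rw [hsingle, map_add, map_smul, map_smul]
  simp only [smul_eq_mul, Complex.mul_re, Complex.sub_re, Complex.sub_im, Complex.mul_im,
    Complex.ofReal_re, Complex.ofReal_im, Complex.I_re, Complex.I_im]
  ring

namespace NumberField.ComplexEmbedding

variable {K ι : Type*} [Field K] [Fintype ι] {φ : ι → K →+* ℂ}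

theorem re_eq_zero_of_re_sum_eq_zero (hφ : ∀ i j, i ≠ j → φ i ≠ φ j ∧ φ i ≠ conjugate (φ j))
    {c : ι → ℂ} (hc : ∀ z, (∑ i, c i * φ i z).re = 0) (j : ι) :
    (c j).re = 0 ∧ (¬IsReal (φ j) → c j = 0) := by
  classical
  have hsum (z : K) : ∑ i, (c i * φ i z + conj (c i) * conj (φ i z)) = 0 := by
    simp only [Finset.sum_add_distrib, ← map_mul]
    rw [← map_sum, Complex.add_conj, hc z, mul_zero, Complex.ofReal_zero]
  -- the characters `φ i` and `conj ∘ φ i` satisfy a linear relation, so by Dedekind it is trivial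
  let l : (K →* ℂ) →₀ ℂ := ∑ i, (Finsupp.single (φ i : K →* ℂ) (c i) +
    Finsupp.single (conjugate (φ i) : K →* ℂ) (conj (c i)))
  have hl : l = 0 := by
    refine linearIndependent_iff.1 (linearIndependent_monoidHom K ℂ) l ?_
    ext z
    simpa [l, map_sum, Finsupp.linearCombination_single] using hsum z
  have hlj := congrArg (fun l : (K →* ℂ) →₀ ℂ => l (φ j)) hl
  simp only [l, Finsupp.coe_finsetSum, Finset.sum_apply, Finsupp.coe_add, Pi.add_apply,
    Finsupp.single_apply, Finset.sum_add_distrib, Finsupp.coe_zero, Pi.zero_apply] at hlj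
  rw [Fintype.sum_eq_single j fun i hij =>
      if_neg (RingHom.coe_monoidHom_injective.ne (hφ i j hij).1),
    Fintype.sum_eq_single j fun i hij =>
      if_neg (RingHom.coe_monoidHom_injective.ne (hφ j i hij.symm).2.symm)] at hlj
  simp only [RingHom.coe_monoidHom_injective.eq_iff, ← isReal_iff, if_true] at hlj
  by_cases hj : IsReal (φ j)
  · rw [if_pos hj, Complex.add_conj] at hlj
    simpa [hj] using hlj.symm
  · rw [if_neg hj, add_zero] at hlj
    simp [hlj]

theorem subset_span_range_pi (hφ : ∀ i j, i ≠ j → φ i ≠ φ j ∧ φ i ≠ conjugate (φ j)) :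
    {x : ι → ℂ | ∀ i, IsReal (φ i) → (x i).im = 0} ⊆
      Submodule.span ℝ (Set.range (RingHom.pi φ)) := by
  classical
  intro x hx
  by_contra hxW
  obtain ⟨f, hfx, hfW⟩ := Submodule.exists_dual_map_eq_bot_of_notMem hxW inferInstance
  set c : ι → ℂ := fun i => f (Pi.single i 1) - f (Pi.single i Complex.I) * Complex.I
  have hc (z : K) : (∑ i, c i * φ i z).re = 0 := by
    rw [← LinearMap.apply_eq_re_sum_mul]
    exact LinearMap.le_ker_iff_map.2 hfW (Submodule.subset_span ⟨z, rfl⟩)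
  apply hfx
  rw [f.apply_eq_re_sum_mul]
  change (∑ i, c i * x i).re = 0
  rw [Complex.re_sum]
  refine Finset.sum_eq_zero fun i _ => ?_
  obtain ⟨hre, hnonreal⟩ := re_eq_zero_of_re_sum_eq_zero hφ hc i
  by_cases hi : IsReal (φ i)
  · rw [Complex.mul_re, hre, hx i hi, zero_mul, mul_zero, sub_zero]
  · rw [hnonreal hi, zero_mul, Complex.zero_re]

end NumberField.ComplexEmbedding

theorem NumberField.finrank_add_card_isReal_le {K ι : Type*} [Field K] [NumberField K]
    [Fintype ι] (ψ₀ : K →+* ℂ) (φ : ι → K →+* ℂ)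
    (hcover : ∀ ψ : K →+* ℂ,
      ψ = ψ₀ ∨ ψ = conjugate ψ₀ ∨ ∃ i, ψ = φ i ∨ ψ = conjugate (φ i)) :
    Module.finrank ℚ K + Nat.card {i // IsReal (φ i)} ≤ 2 + 2 * Fintype.card ι := by
  classical
  set C := Finset.univ.filter fun i => ¬IsReal (φ i)
  have hsub : (Finset.univ : Finset (K →+* ℂ)) ⊆
      {ψ₀, conjugate ψ₀} ∪ Finset.univ.image φ ∪ C.image (conjugate ∘ φ) := by
    intro ψ _
    rcases hcover ψ with rfl | rfl | ⟨i, rfl | rfl⟩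
    · simp
    · simp
    · simp
    · by_cases hi : IsReal (φ i)
      · simp [isReal_iff.1 hi]
      · simp only [Finset.mem_union, Finset.mem_image]
        exact Or.inr ⟨i, by simpa [C] using hi, rfl⟩
  have hcard : Module.finrank ℚ K ≤ 2 + Fintype.card ι + C.card :=
    calc Module.finrank ℚ K = (Finset.univ : Finset (K →+* ℂ)).card := by
          rw [Finset.card_univ, Embeddings.card]
      _ ≤ _ := Finset.card_le_card hsub
      _ ≤ 2 + Fintype.card ι + C.card :=
          (Finset.card_union_le _ _).trans <| add_le_add
            ((Finset.card_union_le _ _).trans <|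
              add_le_add Finset.card_le_two (Finset.card_image_le.trans_eq Finset.card_univ))
            Finset.card_image_le
  have hsplit : (Finset.univ.filter fun i => IsReal (φ i)).card + C.card = Fintype.card ι :=
    Finset.card_filter_add_card_filter_not _
  rw [Nat.card_eq_fintype_card, Fintype.card_subtype]
  omega

theorem NumberField.span_range_le_span_image_integralClosure {K E : Type*} [Field K]
    [NumberField K] [AddCommGroup E] [Module ℝ E] (ψ : K →+ E) :
    Submodule.span ℝ (Set.range ψ) ≤ Submodule.span ℝ (ψ '' integralClosure ℤ K) := by
  refine Submodule.span_le.2 ?_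
  rintro _ ⟨z, rfl⟩
  have hz : IsAlgebraic ℤ z := by
    rw [IsFractionRing.isAlgebraic_iff ℤ ℚ K]
    exact (IsIntegral.of_finite ℚ z).isAlgebraic
  obtain ⟨n, hn, hint⟩ := hz.exists_integral_multiple
  have hψz : ψ z = (n : ℝ)⁻¹ • ψ (n • z) := by
    rw [map_zsmul, ← Int.cast_smul_eq_zsmul ℝ, inv_smul_smul₀ (by exact_mod_cast hn)]
  rw [hψz]
  exact Submodule.smul_mem _ _ (Submodule.subset_span ⟨_, hint, rfl⟩)

theorem NumberField.Units.exists_norm_embedding_lt_one (K : Type*) [Field K] [NumberField K]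
    (w₀ : InfinitePlace K) :
    ∃ u : (𝓞 K)ˣ, ∀ φ : K →+* ℂ, InfinitePlace.mk φ ≠ w₀ → ‖φ u‖ < 1 := by
  obtain ⟨u, hu⟩ := Units.dirichletUnitTheorem.exists_unit K w₀
  refine ⟨u, fun φ hφ => lt_of_not_ge fun h => ?_⟩
  have hlog := hu _ hφ
  rw [InfinitePlace.apply] at hlog
  exact (Real.log_nonneg h).not_gt hlog

theorem NumberField.ComplexEmbedding.subset_closure_image_integralClosure {K ι : Type*}
    [Field K] [NumberField K] [Fintype ι] {φ : ι → K →+* ℂ}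
    (hφ : ∀ i j, i ≠ j → φ i ≠ φ j ∧ φ i ≠ conjugate (φ j)) {w₀ : InfinitePlace K}
    (hw₀ : ∀ i, InfinitePlace.mk (φ i) ≠ w₀) :
    {x : ι → ℂ | ∀ i, IsReal (φ i) → (x i).im = 0} ⊆
      closure (RingHom.pi φ '' integralClosure ℤ K) := by
  set V := {x : ι → ℂ | ∀ i, IsReal (φ i) → (x i).im = 0}
  obtain ⟨u, hu⟩ := Units.exists_norm_embedding_lt_one K w₀
  set S := (integralClosure ℤ K).toSubring.map (RingHom.pi φ)
  set c := RingHom.pi φ u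
  have hcS : c ∈ S := ⟨u, (u : 𝓞 K).2, rfl⟩
  have hc : ‖c‖ < 1 := (pi_norm_lt_iff one_pos).2 fun i => hu (φ i) (hw₀ i)
  have hpow (v : ι → ℂ) : Tendsto (fun n => (LinearMap.mulLeft ℝ c ^ n) v) atTop (𝓝 0) := by
    simpa [LinearMap.pow_mulLeft] using
      (tendsto_pow_atTop_nhds_zero_of_norm_lt_one hc).mul_const v
  have hVc : V ⊆ LinearMap.mulLeft ℝ c '' V := by
    intro x hx
    refine ⟨x / c, fun i hi => ?_, funext fun i => ?_⟩
    · have hci : (c i).im = 0 := Complex.conj_eq_iff_im.1 (RingHom.congr_fun hi (u : K))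
      simp [Complex.div_im, hx i hi, hci]
    · exact mul_div_cancel₀ _ ((map_ne_zero_iff _ (φ i).injective).2 (Units.coe_ne_zero u))
  have hVS : V ⊆ Submodule.span ℝ (S : Set (ι → ℂ)) :=
    (subset_span_range_pi hφ).trans
      (span_range_le_span_image_integralClosure (RingHom.pi φ).toAddMonoidHom)
  simpa [S] using subset_closure_of_contracting S.toAddSubgroup (LinearMap.mulLeft ℝ c)
    (fun g hg => S.mul_mem hcS hg) hpow hVS hVc

theorem isReal_algHom_iff_le {K : IntermediateField ℚ ℂ} [NumberField K] {s t : ℕ}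
    (hd : Module.finrank ℚ K = 2 * s + t) (σ : Fin (s - 1 + t) → (K →ₐ[ℚ] ℂ))
    (hrealemb : ∀ i : Fin (s - 1 + t), s - 1 ≤ (i : ℕ) → ∀ z : K, ((σ i) z).im = 0)
    (hcomplete : ∀ φ : K →ₐ[ℚ] ℂ, (∀ z : K, φ z = (z : ℂ)) ∨
      (∀ z : K, φ z = conj (z : ℂ)) ∨
      ∃ i, (∀ z : K, φ z = σ i z) ∨ (∀ z : K, φ z = conj (σ i z)))
    (i : Fin (s - 1 + t)) :
    IsReal (σ i : K →+* ℂ) ↔ s - 1 ≤ (i : ℕ) := by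
  have hreal (j : Fin (s - 1 + t)) (hj : s - 1 ≤ (j : ℕ)) : IsReal (σ j : K →+* ℂ) :=
    isReal_iff.2 (RingHom.ext fun z => Complex.conj_eq_iff_im.2 (hrealemb j hj z))
  refine ⟨fun hi => ?_, hreal i⟩
  by_contra hlt
  have hcover (ψ : K →+* ℂ) : ψ = (K.val : K →+* ℂ) ∨ ψ = conjugate (K.val : K →+* ℂ) ∨
      ∃ j, ψ = σ j ∨ ψ = conjugate (σ j) := by
    rcases hcomplete ψ.toRatAlgHom with h | h | ⟨j, h | h⟩
    · exact Or.inl (RingHom.ext h)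
    · exact Or.inr (Or.inl (RingHom.ext h))
    · exact Or.inr (Or.inr ⟨j, Or.inl (RingHom.ext h)⟩)
    · exact Or.inr (Or.inr ⟨j, Or.inr (RingHom.ext h)⟩)
  -- `σ i` together with the last `t` embeddings gives `t + 1` real ones among the `σ j`,
  -- one too many for `2 * s + t` embeddings in total
  let f : Option (Fin t) → {j // IsReal (σ j : K →+* ℂ)} := fun o =>
    o.elim ⟨i, hi⟩ fun k => ⟨Fin.natAdd (s - 1) k, hreal _ (by simp)⟩
  have hf : Function.Injective f := by
    rintro (_ | a) (_ | b) h <;> simp [f, Fin.ext_iff] at h ⊢ <;> omega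
  have h1 := Nat.card_le_card_of_injective f hf
  have h2 := finrank_add_card_isReal_le _ _ hcover
  simp only [Nat.card_eq_fintype_card, Fintype.card_option, Fintype.card_fin] at h1 h2
  omega

theorem star_image_dense_general (K : IntermediateField ℚ ℂ) [FiniteDimensional ℚ K]
    (s t : ℕ) (hd : Module.finrank ℚ K = 2 * s + t)
    (σ : Fin (s - 1 + t) → (K →ₐ[ℚ] ℂ))
    (hrealemb : ∀ i : Fin (s - 1 + t), s - 1 ≤ (i : ℕ) → ∀ z : K, ((σ i) z).im = 0)
    (hnid : ∀ i, ∃ z : K, σ i z ≠ (z : ℂ))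
    (hnconj : ∀ i, ∃ z : K, σ i z ≠ conj (z : ℂ))
    (hpair : ∀ i j, i ≠ j →
      (∃ z : K, σ i z ≠ σ j z) ∧ (∃ z : K, σ i z ≠ conj (σ j z)))
    (hcomplete : ∀ φ : K →ₐ[ℚ] ℂ, (∀ z : K, φ z = (z : ℂ)) ∨
      (∀ z : K, φ z = conj (z : ℂ)) ∨
      ∃ i, (∀ z : K, φ z = σ i z) ∨ (∀ z : K, φ z = conj (σ i z))) :
    ∀ x : Fin (s - 1 + t) → ℂ, (∀ i : Fin (s - 1 + t), s - 1 ≤ (i : ℕ) → (x i).im = 0) →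
      x ∈ closure {y : Fin (s - 1 + t) → ℂ |
        ∃ z : K, IsIntegral ℤ (z : ℂ) ∧ y = fun i => σ i z} := by
  intro x hx
  have : NumberField K := ⟨⟩
  have hint (z : K) : IsIntegral ℤ (z : ℂ) ↔ IsIntegral ℤ z :=
    isIntegral_algHom_iff K.val.toRingHom.toIntAlgHom K.val.toRingHom.injective
  have himage : {y | ∃ z : K, IsIntegral ℤ (z : ℂ) ∧ y = fun i => σ i z} =
      RingHom.pi (fun i => (σ i : K →+* ℂ)) '' integralClosure ℤ K := by
    ext y
    constructor <;> rintro ⟨z, hz, rfl⟩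
    exacts [⟨z, (hint z).1 hz, rfl⟩, ⟨z, (hint z).2 hz, rfl⟩]
  have hdistinct (i j) (hij : i ≠ j) :
      (σ i : K →+* ℂ) ≠ σ j ∧ (σ i : K →+* ℂ) ≠ conjugate (σ j) := by
    obtain ⟨⟨z, hz⟩, ⟨w, hw⟩⟩ := hpair i j hij
    exact ⟨fun h => hz (RingHom.congr_fun h z), fun h => hw (RingHom.congr_fun h w)⟩
  have hplace (i) : InfinitePlace.mk (σ i : K →+* ℂ) ≠ InfinitePlace.mk (K.val : K →+* ℂ) := by
    rw [Ne, InfinitePlace.mk_eq_iff]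
    rintro (h | h)
    · obtain ⟨z, hz⟩ := hnid i
      exact hz (RingHom.congr_fun h z)
    · obtain ⟨z, hz⟩ := hnconj i
      have hz' : conj (σ i z) = z := RingHom.congr_fun h z
      exact hz (by rw [← hz', Complex.conj_conj])
  rw [himage]
  exact subset_closure_image_integralClosure hdistinct hplace fun i hi =>
    hx i ((isReal_algHom_iff_le hd σ hrealemb hcomplete i).1 hi)

/-- Density of the image of the ring of integers under the star map.

K ⊆ ℂ is a number field closed under complex conjugation, not contained in ℝ, of degree
d = 2s + t ≥ 4, with s pairs of complex embeddings and t real embeddings. The family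
σ : Fin (s−1+t) → (K →ₐ[ℚ] ℂ) collects all embeddings of K into ℂ except the identity
and complex conjugation, one from each pair of complex-conjugate embeddings (the last t
of them being the real embeddings). Then the image of the ring of integers 𝒪_K under
the star map z ↦ (σ i z)_i is dense in ℂ^{s−1} × ℝ^t, i.e. every point of
Fin (s−1+t) → ℂ whose last t coordinates are real lies in the closure of the image. -/
theorem star_image_dense (K : IntermediateField ℚ ℂ) [FiniteDimensional ℚ K]
    (s t : ℕ) (hs : 1 ≤ s) (hd : Module.finrank ℚ K = 2 * s + t) (h4 : 4 ≤ 2 * s + t)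
    (hconjK : ∀ z : ℂ, z ∈ K → conj z ∈ K)
    (hnotreal : ∃ z : ℂ, z ∈ K ∧ z.im ≠ 0)
    (σ : Fin (s - 1 + t) → (K →ₐ[ℚ] ℂ))
    (hrealemb : ∀ i : Fin (s - 1 + t), s - 1 ≤ (i : ℕ) → ∀ z : K, ((σ i) z).im = 0)
    (hnid : ∀ i, ∃ z : K, σ i z ≠ (z : ℂ))
    (hnconj : ∀ i, ∃ z : K, σ i z ≠ conj (z : ℂ))
    (hpair : ∀ i j, i ≠ j →
      (∃ z : K, σ i z ≠ σ j z) ∧ (∃ z : K, σ i z ≠ conj (σ j z)))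
    (hcomplete : ∀ φ : K →ₐ[ℚ] ℂ, (∀ z : K, φ z = (z : ℂ)) ∨
      (∀ z : K, φ z = conj (z : ℂ)) ∨
      ∃ i, (∀ z : K, φ z = σ i z) ∨ (∀ z : K, φ z = conj (σ i z))) :
    ∀ x : Fin (s - 1 + t) → ℂ, (∀ i : Fin (s - 1 + t), s - 1 ≤ (i : ℕ) → (x i).im = 0) →
      x ∈ closure {y : Fin (s - 1 + t) → ℂ |
        ∃ z : K, IsIntegral ℤ (z : ℂ) ∧ y = fun i => σ i z} :=
  star_image_dense_general K s t hd σ hrealemb hnid hnconj hpair hcomplete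
end

section
/- All solutions of f_m(d) = 2 with m ≥ 4 and d ∈ D_m of the form d = (2k, s, k, k+s) with m = 2s, s ≥ 2 and 1 ≤ k ≤ s/2 are indeed valid: for such m and d one has d ∈ D_m and f_m(d) = 2. -/
theorem isPrimitiveRoot_zetaC {m : ℕ} (hm : m ≠ 0) : IsPrimitiveRoot (zetaC m) m :=
  Complex.isPrimitiveRoot_exp m hm

theorem IsPrimitiveRoot.pow_eq_neg_one_of_two_mul {R : Type*} [CommRing R] [NoZeroDivisors R]
    {ζ : R} {s : ℕ} (h : IsPrimitiveRoot ζ (2 * s)) (hs : s ≠ 0) : ζ ^ s = -1 := by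
  have h2 : IsPrimitiveRoot (ζ ^ s) 2 := by
    simpa [hs] using h.pow_of_dvd hs (dvd_mul_left s 2)
  exact h2.eq_neg_one_of_two_right

theorem one_sub_pow_two_mul_div_eq_two {K : Type*} [Field K] {z : K} {s k : ℕ}
    (hs : z ^ s = -1) (hk : z ^ (2 * k) ≠ 1) :
    (1 - z ^ (2 * k)) * (1 - z ^ s) / ((1 - z ^ k) * (1 - z ^ (k + s))) = 2 := by
  have hden : (1 - z ^ k) * (1 - z ^ (k + s)) = 1 - z ^ (2 * k) := by
    rw [pow_add, hs, two_mul, pow_add]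
    ring
  rw [hden, hs, mul_div_cancel_left₀ _ (sub_ne_zero.mpr hk.symm)]
  norm_num

theorem family_xii_valid_general (s k m : ℕ) (hk : 1 ≤ k) (hks : 2 * k ≤ s)
    (hm : m = 2 * s) :
    (0 < k ∧ k < 2 * k ∧ 2 * k ≤ s ∧ s < k + s ∧ k + s ≤ m - 1 ∧
      2 * k + s = k + (k + s))
    ∧ fm m (2 * k) s k (k + s) = 2 := by
  refine ⟨by omega, ?_⟩
  subst hm
  have hζ := isPrimitiveRoot_zetaC (m := 2 * s) (by omega)
  exact one_sub_pow_two_mul_div_eq_two (hζ.pow_eq_neg_one_of_two_mul (by omega))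
    (hζ.pow_ne_one_of_pos_of_lt (by omega) (by omega))

/-- Family (xii): for m = 2s with s ≥ 2 and 1 ≤ k ≤ s/2, the quadruple
d = (2k, s, k, k+s) lies in D_m and satisfies f_m(d) = 2. -/
theorem family_xii_valid (s k m : ℕ) (hs : 2 ≤ s) (hk : 1 ≤ k) (hks : 2 * k ≤ s)
    (hm : m = 2 * s) :
    (0 < k ∧ k < 2 * k ∧ 2 * k ≤ s ∧ s < k + s ∧ k + s ≤ m - 1 ∧
      2 * k + s = k + (k + s))
    ∧ fm m (2 * k) s k (k + s) = 2 :=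
  family_xii_valid_general s k m hk hks hm
end
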